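/- arXiv:2209.08715 — 4 statements merged into one kernel-verified Lean document; each statement's English description precedes it below -/
import Mathlib

section
/- Let A be an associative conformal algebra. The cup product on Hochschild cochains maps cocycles to cocycles and (cocycle, coboundary) pairs to coboundaries, hence induces a well-defined product ⊔ on Hochschild cohomology such that (⊕_{i≥0} HH^i(A), ⊔) is a graded associative algebra. -/
open Finset

/-!
Framework for the Hochschild cohomology of an associative conformal algebra over a
field `k` of characteristic zero.

Polynomials with coefficients in a `k`-vector space `A` are represented by their
associated polynomial functions (this is faithful since a characteristic zero field is
infinite).  A conformal `n`-cochain (a conformal sesquilinear map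
`A^{⊗ n} → A[λ₁, …, λ_{n-1}]`) is represented by a function taking a family of
λ-values `ℕ → k` and a family of arguments `ℕ → A`, only an initial segment of which
is relevant.
-/

/-- Raw carriers for conformal polylinear maps: a family of λ-parameters and a family
of arguments (only an initial segment of each is relevant). -/
abbrev CMap (k : Type*) (A : Type*) : Type _ := (ℕ → k) → (ℕ → A) → A

variable {k : Type*} [Field k]
variable {A : Type*} [AddCommGroup A] [Module k A]

/-- `F` is a polynomial function of the first `m` λ-variables. -/
def IsPolyIn (m : ℕ) (F : (ℕ → k) → A) : Prop :=
  ∃ (N : ℕ) (c : (Fin m → Fin N) → A),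
    ∀ lam : ℕ → k, F lam = ∑ α : Fin m → Fin N, (∏ r : Fin m, lam r.1 ^ (α r).1) • c α

/-- One-variable polynomial functions `k → A`. -/
def IsPolyFun (F : k → A) : Prop :=
  ∃ c : ℕ →₀ A, ∀ x : k, F x = c.sum fun j v => x ^ j • v

/-- The coefficients of a one-variable polynomial function (via choice; the
coefficients are uniquely determined since `k` is infinite). -/
noncomputable def polyCoeffs (F : k → A) : ℕ →₀ A :=
  letI := Classical.propDecidable (IsPolyFun F)
  if h : IsPolyFun F then h.choose else 0

/-- Evaluation of a polynomial function `F(λ)` at `λ = -∂`, where `∂ = D`. -/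
noncomputable def evalNegD (D : A →ₗ[k] A) (F : k → A) : A :=
  (polyCoeffs F).sum fun j v => ((-1 : ℤ) ^ j) • (D ^ j) v

/-- An associative conformal algebra structure on the `k[∂]`-module `(A, D)`, with the
λ-product in the polynomial-function representation. -/
structure AssocConfAlg (k : Type*) (A : Type*) [Field k] [AddCommGroup A] [Module k A] where
  /-- the action of `∂` -/
  D : A →ₗ[k] A
  /-- the λ-product `(a, b, λ) ↦ a_λ b` -/
  mul : A → A → k → A
  add_left : ∀ a b c lam, mul (a + b) c lam = mul a c lam + mul b c lam
  smul_left : ∀ (r : k) a c lam, mul (r • a) c lam = r • mul a c lam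
  add_right : ∀ a b c lam, mul a (b + c) lam = mul a b lam + mul a c lam
  smul_right : ∀ (r : k) a c lam, mul a (r • c) lam = r • mul a c lam
  poly : ∀ a b, IsPolyFun fun lam => mul a b lam
  D_left : ∀ a b lam, mul (D a) b lam = -(lam • mul a b lam)
  D_right : ∀ a b lam, mul a (D b) lam = D (mul a b lam) + lam • mul a b lam
  assoc : ∀ a b c lam mu, mul (mul a b lam) c (lam + mu) = mul a (mul b c mu) lam

/-- `φ ∈ U_m`: a conformal sesquilinear map with `m` λ-variables and `m + 1`
arguments; `U_{n-1}` is the space `C^n` of Hochschild `n`-cochains, `n ≥ 1`. -/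
structure IsU (D : A →ₗ[k] A) (m : ℕ) (φ : CMap k A) : Prop where
  depends : ∀ lam lam' a a', (∀ r, r < m → lam r = lam' r) →
      (∀ r, r < m + 1 → a r = a' r) → φ lam a = φ lam' a'
  map_add : ∀ lam a i, i < m + 1 → ∀ x y : A,
      φ lam (Function.update a i (x + y))
        = φ lam (Function.update a i x) + φ lam (Function.update a i y)
  map_smul : ∀ lam a i, i < m + 1 → ∀ (r : k) (x : A),
      φ lam (Function.update a i (r • x)) = r • φ lam (Function.update a i x)
  poly : ∀ a, IsPolyIn m fun lam => φ lam a
  sesq : ∀ lam a i, i < m → ∀ x : A,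
      φ lam (Function.update a i (D x)) = -(lam i • φ lam (Function.update a i x))
  sesq_last : ∀ lam a (x : A),
      φ lam (Function.update a m (D x))
        = D (φ lam (Function.update a m x))
          + (∑ j ∈ Finset.range m, lam j) • φ lam (Function.update a m x)

/-- `f •ᵢ g`: insertion of `g ∈ U_n` into `f` at position `i`. -/
def bulletAt (n i : ℕ) (f g : CMap k A) : CMap k A := fun lam a =>
  f (fun r => if r < i then lam r
      else if r = i then ∑ t ∈ Finset.range (n + 1), lam (i + t)
      else lam (r + n))
    (fun r => if r < i then a r
      else if r = i then g (fun t => lam (i + t)) (fun t => a (i + t))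
      else a (r + n))

/-- `f • g = ∑_{i=0}^{m} (-1)^{n i} f •ᵢ g` for `f ∈ U_m`, `g ∈ U_n`. -/
def bullet (m n : ℕ) (f g : CMap k A) : CMap k A := fun lam a =>
  ∑ i ∈ Finset.range (m + 1), ((-1 : ℤ) ^ (n * i)) • bulletAt n i f g lam a

/-- The graded commutator `[f, g] = f • g - (-1)^{mn} g • f` for `f ∈ U_m`, `g ∈ U_n`. -/
def cbracketU (m n : ℕ) (f g : CMap k A) : CMap k A := fun lam a =>
  bullet m n f g lam a - ((-1 : ℤ) ^ (m * n)) • bullet n m g f lam a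

/-- The degree `-1` bracket `[f, g] = f • g - (-1)^{(m-1)(n-1)} g • f` on cochains,
for `f ∈ C^m = U_{m-1}`, `g ∈ C^n = U_{n-1}` (`m, n ≥ 1`). -/
def gbracket (m n : ℕ) (f g : CMap k A) : CMap k A :=
  cbracketU (m - 1) (n - 1) f g

/-- The cup product `f ⊔ g` of `f ∈ C^m` (`m ≥ 1`) with `g ∈ C^n`. -/
def cup (mul : A → A → k → A) (m : ℕ) (f g : CMap k A) : CMap k A := fun lam a =>
  mul (f lam a) (g (fun r => lam (r + m)) (fun r => a (r + m))) (∑ j ∈ Finset.range m, lam j)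

/-- The Hochschild differential `d_n : C^n → C^{n+1}` (`n ≥ 1`). -/
def hdiff (mul : A → A → k → A) (n : ℕ) (φ : CMap k A) : CMap k A := fun lam a =>
  mul (a 0) (φ (fun r => lam (r + 1)) (fun r => a (r + 1))) (lam 0)
    + ∑ i ∈ Finset.range n, ((-1 : ℤ) ^ (i + 1)) •
        φ (fun r => if r < i then lam r else if r = i then lam i + lam (i + 1) else lam (r + 1))
          (fun r => if r < i then a r
            else if r = i then mul (a i) (a (i + 1)) (lam i)
            else a (r + 1))
    + ((-1 : ℤ) ^ (n + 1)) • mul (φ lam a) (a n) (∑ j ∈ Finset.range n, lam j)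

/-- The Hochschild differential `d_0 : C^0 = A/∂A → C^1` on representatives:
`d_0(b)(a) = a_{-∂} b - b_0 a`. -/
noncomputable def hdiff0 (D : A →ₗ[k] A) (mul : A → A → k → A) (b : A) : CMap k A :=
  fun _lam a => evalNegD D (fun x => mul (a 0) b x) - mul b (a 0) 0

/-- `f • b` for `f ∈ C^m` (`m ≥ 1`) and `b` a representative of an element of
`C^0 = A/∂A`. -/
noncomputable def bullet0 (D : A →ₗ[k] A) (m : ℕ) (f : CMap k A) (b : A) : CMap k A :=
  fun lam a =>
    (∑ i ∈ Finset.range (m - 1), ((-1 : ℤ) ^ i) •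
        f (fun r => if r < i then lam r else if r = i then 0 else lam (r - 1))
          (fun r => if r < i then a r else if r = i then b else a (r - 1)))
      + ((-1 : ℤ) ^ (m - 1)) •
          evalNegD D (fun x =>
            f (fun r => if r = m - 2 then x else lam r)
              (fun r => if r = m - 1 then b else a r))

/-- `b ⊔ g = b ∘₀ g(…)` for `b ∈ C^0`, `g ∈ C^n`. -/
def cup0L (mul : A → A → k → A) (b : A) (g : CMap k A) : CMap k A :=
  fun lam a => mul b (g lam a) 0

/-- `f ⊔ b = f(…) ∘_{-∂} b` for `f ∈ C^m`, `b ∈ C^0`. -/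
noncomputable def cup0R (D : A →ₗ[k] A) (mul : A → A → k → A) (f : CMap k A) (b : A) :
    CMap k A :=
  fun lam a => evalNegD D (fun x => mul (f lam a) b x)

/-- `b ⊔ b' = b ∘_{-∂} b'` for `b, b' ∈ C^0`. -/
noncomputable def cup00 (D : A →ₗ[k] A) (mul : A → A → k → A) (b b' : A) : A :=
  evalNegD D (fun x => mul b b' x)

/-- Hochschild coboundaries in `C^n`. -/
def IsCoboundary (D : A →ₗ[k] A) (mul : A → A → k → A) : ℕ → CMap k A → Prop
  | 0, _ => False
  | 1, φ => ∃ b : A, φ = hdiff0 D mul b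
  | (m + 2), φ => ∃ ψ : CMap k A, IsU D m ψ ∧ φ = hdiff mul (m + 1) ψ

/-- The λ-multiplication of `A`, viewed as a `2`-cochain `ρ ∈ C²(A, A) = U₁`. -/
def rhoOf (S : AssocConfAlg k A) : CMap k A := fun lam a => S.mul (a 0) (a 1) (lam 0)


/-! ### Auxiliary machinery -/

section PolyRep

variable {k : Type*} [Field k]
variable {A : Type*} [AddCommGroup A] [Module k A]

/-- `F` agrees with the polynomial with coefficients `v 0, …, v (N-1)`. -/
def HasRep (F : k → A) (N : ℕ) (v : ℕ → A) : Prop :=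
  ∀ x : k, F x = ∑ j ∈ Finset.range N, x ^ j • v j

lemma isPolyFun_of_hasRep {F : k → A} {N : ℕ} {v : ℕ → A} (h : HasRep F N v) :
    IsPolyFun F := by
  classical
  refine ⟨Finsupp.onFinset (range N) (fun j => if j < N then v j else 0)
    (fun j hj => by
      rw [Finset.mem_range]; by_contra h'
      exact hj (if_neg (by omega))), fun x => ?_⟩
  rw [h x, Finsupp.sum_of_support_subset _ Finsupp.support_onFinset_subset _
    (fun i _ => smul_zero _)]
  refine Finset.sum_congr rfl fun j hj => ?_
  rw [Finsupp.onFinset_apply, if_pos (Finset.mem_range.1 hj)]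

lemma hasRep_of_isPolyFun {F : k → A} (h : IsPolyFun F) : ∃ N v, HasRep F N v := by
  obtain ⟨c, hc⟩ := h
  obtain ⟨N, hN⟩ := Finset.exists_nat_subset_range c.support
  exact ⟨N, c, fun x => by
    rw [hc x, Finsupp.sum_of_support_subset _ hN _ (fun i _ => smul_zero _)]⟩

/-- Padding: a sum with vanishing tail terms can be extended. -/
lemma sum_pad {N L : ℕ} (hNL : N ≤ L) (g : ℕ → A → A) (hg : ∀ j, g j 0 = 0) (v : ℕ → A) :
    ∑ j ∈ range N, g j (v j) = ∑ j ∈ range L, g j (if j < N then v j else 0) := by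
  rw [← Finset.sum_subset (Finset.range_subset_range.2 hNL)
    (fun j _ hj => by rw [if_neg (by simp [Finset.mem_range] at hj ⊢; omega), hg])]
  exact Finset.sum_congr rfl fun j hj => by rw [if_pos (Finset.mem_range.1 hj)]

lemma hasRep_mono {F : k → A} {N : ℕ} {v : ℕ → A} (h : HasRep F N v) {L : ℕ} (hL : N ≤ L) :
    HasRep F L (fun j => if j < N then v j else 0) := fun x => by
  rw [h x, sum_pad hL (fun j w => x ^ j • w) (fun j => smul_zero _)]

variable [CharZero k]

/-- Coefficient uniqueness over an infinite field. -/
lemma rep_zero {N : ℕ} {v : ℕ → A} (h : ∀ x : k, ∑ j ∈ range N, x ^ j • v j = 0) :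
    ∀ j < N, v j = 0 := by
  intro j hj
  rw [← Module.forall_dual_apply_eq_zero_iff k]
  intro φ
  have hp : (∑ i ∈ range N, Polynomial.C (φ (v i)) * Polynomial.X ^ i : Polynomial k) = 0 := by
    apply Polynomial.funext
    intro x
    have := congrArg φ (h x)
    simp only [map_sum, map_smul, map_zero] at this
    simp only [Polynomial.eval_finset_sum, Polynomial.eval_mul, Polynomial.eval_C,
      Polynomial.eval_pow, Polynomial.eval_X, Polynomial.eval_zero]
    rw [← this]
    exact Finset.sum_congr rfl fun i _ => by rw [smul_eq_mul, mul_comm]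
  have h2 := congrArg (fun P : Polynomial k => P.coeff j) hp
  simp only [Polynomial.finset_sum_coeff, Polynomial.coeff_C_mul, Polynomial.coeff_X_pow,
    Polynomial.coeff_zero] at h2
  rw [Finset.sum_eq_single j (fun i _ hij => by rw [if_neg (fun hh => hij hh.symm), mul_zero])
    (fun hj' => absurd (Finset.mem_range.2 hj) hj')] at h2
  simpa using h2

lemma rep_unique {N : ℕ} {v w : ℕ → A}
    (h : ∀ x : k, ∑ j ∈ range N, x ^ j • v j = ∑ j ∈ range N, x ^ j • w j) :
    ∀ j < N, v j = w j := by
  intro j hj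
  have := rep_zero (v := fun j => v j - w j) (fun x => by
    simp only [smul_sub, Finset.sum_sub_distrib]
    rw [h x, sub_self]) j hj
  exact sub_eq_zero.1 this

/-- Computation of `evalNegD` from any polynomial representation. -/
lemma evalNegD_rep (D : A →ₗ[k] A) {F : k → A} {N : ℕ} {v : ℕ → A} (h : HasRep F N v) :
    evalNegD D F = ∑ j ∈ range N, ((-1 : ℤ) ^ j) • (D ^ j) (v j) := by
  classical
  have hpf : IsPolyFun F := isPolyFun_of_hasRep h
  rw [evalNegD, polyCoeffs]
  rw [dif_pos hpf]
  obtain ⟨M, hM⟩ := Finset.exists_nat_subset_range hpf.choose.support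
  have hrep2 : HasRep F M (fun j => hpf.choose j) := fun x => by
    rw [hpf.choose_spec x, Finsupp.sum_of_support_subset _ hM _ (fun i _ => smul_zero _)]
  rw [Finsupp.sum_of_support_subset _ hM _ (fun i _ => by simp)]
  have h1 := hasRep_mono h (le_max_left N M)
  have h2 := hasRep_mono hrep2 (le_max_right N M)
  have heq : ∀ j < max N M, (if j < N then v j else 0) = (if j < M then hpf.choose j else 0) :=
    rep_unique fun x => by rw [← h1 x, ← h2 x]
  rw [sum_pad (le_max_right N M) (fun j w => ((-1 : ℤ) ^ j) • (D ^ j) w) (fun j => by simp),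
    sum_pad (le_max_left N M) (fun j w => ((-1 : ℤ) ^ j) • (D ^ j) w) (fun j => by simp)]
  exact (Finset.sum_congr rfl fun j hj =>
    congrArg _ (congrArg _ (heq j (Finset.mem_range.1 hj)))).symm

lemma evalNegD_add' (D : A →ₗ[k] A) {F G : k → A} {N : ℕ} {v : ℕ → A} {M : ℕ} {w : ℕ → A}
    (hF : HasRep F N v) (hG : HasRep G M w) :
    evalNegD D (fun x => F x + G x) = evalNegD D F + evalNegD D G := by
  have h1 := hasRep_mono hF (le_max_left N M)
  have h2 := hasRep_mono hG (le_max_right N M)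
  have h3 : HasRep (fun x => F x + G x) (max N M)
      (fun j => (if j < N then v j else 0) + (if j < M then w j else 0)) := fun x => by
    simp only [smul_add, Finset.sum_add_distrib]; rw [← h1 x, ← h2 x]
  rw [evalNegD_rep D h1, evalNegD_rep D h2, evalNegD_rep D h3, ← Finset.sum_add_distrib]
  exact Finset.sum_congr rfl fun j _ => by rw [map_add, smul_add]

lemma evalNegD_smul' (D : A →ₗ[k] A) (r : k) {F : k → A} {N : ℕ} {v : ℕ → A}
    (hF : HasRep F N v) :
    evalNegD D (fun x => r • F x) = r • evalNegD D F := by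
  have h3 : HasRep (fun x => r • F x) N (fun j => r • v j) := fun x => by
    dsimp only
    rw [hF x, Finset.smul_sum]
    exact Finset.sum_congr rfl fun j _ => smul_comm _ _ _
  rw [evalNegD_rep D hF, evalNegD_rep D h3, Finset.smul_sum]
  exact Finset.sum_congr rfl fun j _ => by rw [map_smul, smul_comm]

lemma evalNegD_zero (D : A →ₗ[k] A) : evalNegD D (fun _ => (0 : A)) = 0 := by
  rw [evalNegD_rep D (N := 0) (v := fun _ => 0) (fun x => by simp), Finset.range_zero,
    Finset.sum_empty]

end PolyRep

section MulHoms

variable {k : Type*} [Field k]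
variable {A : Type*} [AddCommGroup A] [Module k A]
variable (S : AssocConfAlg k A)

/-- Left multiplication as an additive hom. -/
def mulL (c : A) (lam : k) : A →+ A :=
  AddMonoidHom.mk' (fun x => S.mul x c lam) (fun a b => S.add_left a b c lam)

/-- Right multiplication as an additive hom. -/
def mulR (a : A) (lam : k) : A →+ A :=
  AddMonoidHom.mk' (fun x => S.mul a x lam) (fun b c => S.add_right a b c lam)

lemma mul_zero_left (c : A) (lam : k) : S.mul 0 c lam = 0 := (mulL S c lam).map_zero
lemma mul_zero_right (a : A) (lam : k) : S.mul a 0 lam = 0 := (mulR S a lam).map_zero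
lemma mul_neg_left (x c : A) (lam : k) : S.mul (-x) c lam = -S.mul x c lam :=
  (mulL S c lam).map_neg x
lemma mul_neg_right (a x : A) (lam : k) : S.mul a (-x) lam = -S.mul a x lam :=
  (mulR S a lam).map_neg x
lemma mul_sub_left (x y c : A) (lam : k) : S.mul (x - y) c lam = S.mul x c lam - S.mul y c lam :=
  (mulL S c lam).map_sub x y
lemma mul_sub_right (a x y : A) (lam : k) : S.mul a (x - y) lam = S.mul a x lam - S.mul a y lam :=
  (mulR S a lam).map_sub x y
lemma mul_zsmul_left (z : ℤ) (x c : A) (lam : k) :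
    S.mul (z • x) c lam = z • S.mul x c lam := map_zsmul (mulL S c lam) z x
lemma mul_zsmul_right (z : ℤ) (a x : A) (lam : k) :
    S.mul a (z • x) lam = z • S.mul a x lam := map_zsmul (mulR S a lam) z x
lemma mul_sum_left {ι : Type*} (s : Finset ι) (h : ι → A) (c : A) (lam : k) :
    S.mul (∑ i ∈ s, h i) c lam = ∑ i ∈ s, S.mul (h i) c lam := map_sum (mulL S c lam) h s
lemma mul_sum_right {ι : Type*} (s : Finset ι) (a : A) (h : ι → A) (lam : k) :
    S.mul a (∑ i ∈ s, h i) lam = ∑ i ∈ s, S.mul a (h i) lam := map_sum (mulR S a lam) h s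

lemma mul_Dpow_left (j : ℕ) (v c : A) (lam : k) :
    S.mul ((S.D ^ j) v) c lam = ((-lam) ^ j) • S.mul v c lam := by
  induction j generalizing v with
  | zero => simp
  | succ j ih =>
    rw [pow_succ, Module.End.mul_apply, ih (S.D v), S.D_left, pow_succ, smul_neg, ← smul_smul]
    rw [neg_smul, smul_neg]

lemma mul_Dpow_right (j : ℕ) (a v : A) (lam : k) :
    S.mul a ((S.D ^ j) v) lam = ((S.D + lam • 1) ^ j) (S.mul a v lam) := by
  induction j generalizing v with
  | zero => simp
  | succ j ih =>
    rw [pow_succ, Module.End.mul_apply, ih (S.D v), S.D_right]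
    rw [pow_succ, Module.End.mul_apply, LinearMap.add_apply, LinearMap.smul_apply,
      Module.End.one_apply]

end MulHoms

section ConfIdent

variable {k : Type*} [Field k] [CharZero k]
variable {A : Type*} [AddCommGroup A] [Module k A]
variable (S : AssocConfAlg k A)

lemma repMul (a b : A) : ∃ N v, HasRep (fun x => S.mul a b x) N v :=
  hasRep_of_isPolyFun (S.poly a b)

/-- `u ↦ u_{-∂} b` as a linear map. -/
noncomputable def ENeg (b : A) : A →ₗ[k] A where
  toFun u := evalNegD S.D (fun x => S.mul u b x)
  map_add' u v := by
    obtain ⟨N, vv, hN⟩ := repMul S u b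
    obtain ⟨M, ww, hM⟩ := repMul S v b
    have h : (fun x => S.mul (u + v) b x) = fun x => (S.mul u b x + S.mul v b x) := by
      funext x; rw [S.add_left]
    rw [h]
    exact evalNegD_add' S.D hN hM
  map_smul' r u := by
    obtain ⟨N, vv, hN⟩ := repMul S u b
    have h : (fun x => S.mul (r • u) b x) = fun x => r • S.mul u b x := by
      funext x; rw [S.smul_left]
    rw [h, evalNegD_smul' S.D r hN]
    rfl

lemma ENeg_apply (b u : A) : ENeg S b u = evalNegD S.D (fun x => S.mul u b x) := rfl

/-- `(∂u)_{-∂} b = ∂ (u_{-∂} b)`. -/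
lemma ENeg_D (b u : A) : ENeg S b (S.D u) = S.D (ENeg S b u) := by
  obtain ⟨N, v, hN⟩ := repMul S u b
  have hrep : HasRep (fun x => S.mul (S.D u) b x) (N + 1)
      (fun j => if j = 0 then 0 else -(v (j - 1))) := by
    intro x
    have hNx : S.mul u b x = ∑ j ∈ range N, x ^ j • v j := hN x
    dsimp only
    rw [S.D_left, hNx, Finset.smul_sum,
      Finset.sum_range_succ' (fun j => x ^ j • if j = 0 then (0 : A) else -(v (j - 1))) N]
    have h0 : (if (0 : ℕ) = 0 then (0 : A) else -(v (0 - 1))) = 0 := if_pos rfl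
    rw [h0, smul_zero, add_zero, ← Finset.sum_neg_distrib]
    refine Finset.sum_congr rfl fun j _ => ?_
    rw [if_neg (Nat.succ_ne_zero j), Nat.add_sub_cancel, smul_neg, smul_smul, ← pow_succ']
  rw [ENeg_apply, ENeg_apply, evalNegD_rep S.D hrep, evalNegD_rep S.D hN,
    Finset.sum_range_succ'
      (fun j => ((-1 : ℤ) ^ j) • (S.D ^ j) (if j = 0 then (0 : A) else -(v (j - 1)))) N]
  have h0 : (if (0 : ℕ) = 0 then (0 : A) else -(v (0 - 1))) = 0 := if_pos rfl
  rw [h0, map_zero, smul_zero, add_zero, map_sum]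
  refine Finset.sum_congr rfl fun j _ => ?_
  rw [if_neg (Nat.succ_ne_zero j), Nat.add_sub_cancel, map_neg, smul_neg,
    pow_succ (-1 : ℤ) j, mul_smul, neg_one_zsmul, smul_neg, neg_neg, map_zsmul,
    pow_succ' S.D j, Module.End.mul_apply]

/-- `(a_{-∂} b)_λ c = a_λ (b_0 c)`. -/
lemma mul_ENeg_left (a b c : A) (lam : k) :
    S.mul (ENeg S b a) c lam = S.mul a (S.mul b c 0) lam := by
  obtain ⟨N, v, hN⟩ := repMul S a b
  rw [ENeg_apply, evalNegD_rep S.D hN, mul_sum_left]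
  have h1 : ∀ j ∈ range N,
      S.mul (((-1 : ℤ) ^ j) • (S.D ^ j) (v j)) c lam = lam ^ j • S.mul (v j) c lam := by
    intro j _
    rw [mul_zsmul_left, mul_Dpow_left, ← Int.cast_smul_eq_zsmul k, smul_smul]
    congr 1
    push_cast
    rw [← mul_pow, neg_mul_neg, one_mul]
  rw [Finset.sum_congr rfl h1]
  have h2 : ∑ j ∈ range N, lam ^ j • S.mul (v j) c lam
      = S.mul (∑ j ∈ range N, lam ^ j • v j) c lam := by
    rw [mul_sum_left]
    exact Finset.sum_congr rfl fun j _ => (S.smul_left _ _ _ _).symm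
  have hNl : S.mul a b lam = ∑ j ∈ range N, lam ^ j • v j := hN lam
  rw [h2, ← hNl]
  have h3 := S.assoc a b c lam 0
  rwa [add_zero] at h3

/-- `a_λ (u_{-∂} b) = (a_λ u)_{-∂} b`. -/
lemma mul_ENeg_right (a u b : A) (lam : k) :
    S.mul a (ENeg S b u) lam = ENeg S b (S.mul a u lam) := by
  classical
  obtain ⟨N, v, hN⟩ := repMul S u b
  set w : ℕ → A := fun j => S.mul a (v j) lam with hw
  have hL : S.mul a (ENeg S b u) lam
      = ∑ j ∈ range N, (-1 : ℤ) ^ j • ((S.D + lam • 1) ^ j) (w j) := by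
    rw [ENeg_apply, evalNegD_rep S.D hN, mul_sum_right]
    exact Finset.sum_congr rfl fun j _ => by rw [mul_zsmul_right, mul_Dpow_right]
  set uT : ℕ → A :=
    fun t => ∑ j ∈ range N, (if t ≤ j then ((-lam) ^ (j - t) * (j.choose t : k)) • w j else 0)
    with huT
  have hrep : HasRep (fun x => S.mul (S.mul a u lam) b x) N uT := by
    intro x
    dsimp only
    have h1 : S.mul (S.mul a u lam) b x = S.mul a (S.mul u b (x - lam)) lam := by
      have h := S.assoc a u b lam (x - lam); rwa [add_sub_cancel] at h
    have hNx : S.mul u b (x - lam) = ∑ j ∈ range N, (x - lam) ^ j • v j := hN (x - lam)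
    rw [h1, hNx, mul_sum_right]
    have h2 : ∀ j ∈ range N, S.mul a ((x - lam) ^ j • v j) lam
        = ∑ t ∈ range N,
            (if t ≤ j then (x ^ t * ((-lam) ^ (j - t) * (j.choose t : k))) • w j else 0) := by
      intro j hj
      rw [S.smul_right, sub_eq_add_neg, add_pow, Finset.sum_smul]
      rw [← Finset.sum_subset (Finset.range_subset_range.2 (Finset.mem_range.1 hj))
        (fun t _ ht => by
          rw [if_neg (by rw [Finset.mem_range] at ht; omega)])]
      refine Finset.sum_congr rfl fun t ht => ?_
      rw [if_pos (by rw [Finset.mem_range] at ht; omega), mul_assoc]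
    rw [Finset.sum_congr rfl h2, Finset.sum_comm]
    refine Finset.sum_congr rfl fun t _ => ?_
    rw [Finset.smul_sum]
    refine Finset.sum_congr rfl fun j _ => ?_
    split_ifs with h
    · rw [smul_smul]
    · rw [smul_zero]
  rw [hL, ENeg_apply, evalNegD_rep S.D hrep]
  have h3 : ∀ t ∈ range N, (-1 : ℤ) ^ t • (S.D ^ t) (uT t)
      = ∑ j ∈ range N,
          (if t ≤ j then ((-1 : k) ^ t * ((-lam) ^ (j - t) * (j.choose t : k))) • (S.D ^ t) (w j)
            else 0) := by
    intro t _
    rw [huT]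
    dsimp only
    rw [map_sum, Finset.smul_sum]
    refine Finset.sum_congr rfl fun j _ => ?_
    split_ifs with h
    · rw [map_smul, ← Int.cast_smul_eq_zsmul k, smul_smul]
      congr 1
      push_cast
      ring
    · rw [map_zero, smul_zero]
  rw [Finset.sum_congr rfl h3, Finset.sum_comm]
  refine Finset.sum_congr rfl fun j hj => ?_
  have hD : Commute S.D (lam • (1 : Module.End k A)) :=
    (Commute.one_right S.D).smul_right lam
  rw [hD.add_pow j, LinearMap.sum_apply, Finset.smul_sum,
    ← Finset.sum_subset (Finset.range_subset_range.2 (Finset.mem_range.1 hj))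
      (fun t _ ht => by rw [if_neg (by rw [Finset.mem_range] at ht; omega)])]
  refine Finset.sum_congr rfl fun t ht => ?_
  rw [if_pos (by rw [Finset.mem_range] at ht; omega)]
  rw [Module.End.mul_apply, Module.End.mul_apply, Module.End.natCast_apply, smul_pow, one_pow,
    LinearMap.smul_apply, Module.End.one_apply, map_smul, map_nsmul,
    ← Nat.cast_smul_eq_nsmul k, ← Int.cast_smul_eq_zsmul k, smul_smul, smul_smul]
  congr 1
  have htj : t ≤ j := by rw [Finset.mem_range] at ht; omega
  have hsign : ((-1 : k)) ^ j = (-1) ^ t * (-1) ^ (j - t) := by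
    rw [← pow_add]; congr 1; omega
  push_cast
  rw [neg_pow lam, hsign]
  ring

end ConfIdent

section SpanMach

variable {k : Type*} [Field k]
variable {A : Type*} [AddCommGroup A] [Module k A]

/-- Monomial functions in the first `m` λ-variables. -/
def monoSet (k : Type*) [Field k] (A : Type*) [AddCommGroup A] [Module k A] (m : ℕ) :
    Set ((ℕ → k) → A) :=
  {F | ∃ (e : ℕ → ℕ) (v : A), F = fun lam => (∏ r ∈ Finset.range m, lam r ^ e r) • v}

lemma isPolyIn_iff_mem_span {m : ℕ} {F : (ℕ → k) → A} :
    IsPolyIn m F ↔ F ∈ Submodule.span k (monoSet k A m) := by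
  classical
  constructor
  · rintro ⟨N, c, hc⟩
    have hF : F = ∑ α : Fin m → Fin N,
        (fun lam => (∏ r : Fin m, lam r.1 ^ (α r).1) • c α) := by
      funext lam
      rw [Finset.sum_apply]
      exact hc lam
    rw [hF]
    refine Submodule.sum_mem _ fun α _ => Submodule.subset_span ?_
    refine ⟨fun i => if h : i < m then (α ⟨i, h⟩ : ℕ) else 0, c α, ?_⟩
    funext lam
    congr 1
    rw [← Fin.prod_univ_eq_prod_range
      (fun i => lam i ^ (if h : i < m then (α ⟨i, h⟩ : ℕ) else 0)) m]
    refine Finset.prod_congr rfl fun r _ => ?_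
    rw [dif_pos r.2, Fin.eta]
  · intro hF
    rw [Submodule.mem_span_set'] at hF
    obtain ⟨n, t, gg, hsum⟩ := hF
    have hgen : ∀ i : Fin n, ∃ (e : ℕ → ℕ) (v : A),
        (gg i : (ℕ → k) → A) = fun lam => (∏ r ∈ Finset.range m, lam r ^ e r) • v :=
      fun i => (gg i).2
    choose e v hev using hgen
    set N : ℕ := 1 + ∑ i : Fin n, ∑ r ∈ Finset.range m, e i r with hN
    have hbound : ∀ (i : Fin n) (r : Fin m), e i r.1 < N := by
      intro i r
      have h1 : e i r.1 ≤ ∑ r' ∈ Finset.range m, e i r' :=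
        Finset.single_le_sum (fun _ _ => Nat.zero_le _) (Finset.mem_range.2 r.2)
      have h2 : (∑ r' ∈ Finset.range m, e i r')
          ≤ ∑ i' : Fin n, ∑ r' ∈ Finset.range m, e i' r' :=
        Finset.single_le_sum (f := fun i' : Fin n => ∑ r' ∈ Finset.range m, e i' r')
          (fun _ _ => Nat.zero_le _) (Finset.mem_univ i)
      omega
    refine ⟨N, fun α => ∑ i : Fin n,
      (if (∀ r : Fin m, (α r : ℕ) = e i r.1) then t i • v i else 0), fun lam => ?_⟩
    have hswap : ∑ α : Fin m → Fin N, (∏ r : Fin m, lam r.1 ^ (α r).1) •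
        ∑ i : Fin n, (if (∀ r : Fin m, (α r : ℕ) = e i r.1) then t i • v i else 0)
        = ∑ i : Fin n, ∑ α : Fin m → Fin N,
            (∏ r : Fin m, lam r.1 ^ (α r).1) •
              (if (∀ r : Fin m, (α r : ℕ) = e i r.1) then t i • v i else 0) := by
      rw [← Finset.sum_comm]
      exact Finset.sum_congr rfl fun α _ => Finset.smul_sum
    rw [hswap]
    have hsingle : ∀ i ∈ (Finset.univ : Finset (Fin n)), (∑ α : Fin m → Fin N,
        (∏ r : Fin m, lam r.1 ^ (α r).1) •
          (if (∀ r : Fin m, (α r : ℕ) = e i r.1) then t i • v i else 0))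
        = t i • (gg i : (ℕ → k) → A) lam := by
      intro i _
      set α₀ : Fin m → Fin N := fun r => ⟨e i r.1, hbound i r⟩ with hα₀
      rw [Finset.sum_eq_single α₀ (fun α _ hne => by
          rw [if_neg, smul_zero]
          intro hall
          exact hne (funext fun r => Fin.ext (hall r))
        ) (fun h => absurd (Finset.mem_univ _) h)]
      rw [if_pos (fun r => rfl)]
      have hGlam : (gg i : (ℕ → k) → A) lam
          = (∏ r ∈ Finset.range m, lam r ^ e i r) • v i := by
        conv_lhs => rw [hev i]
      rw [hGlam, smul_comm]
      congr 1
      rw [← Fin.prod_univ_eq_prod_range (fun r => lam r ^ e i r) m]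
    rw [Finset.sum_congr rfl hsingle]
    have hFl : F lam = (∑ i : Fin n, t i • (gg i : (ℕ → k) → A)) lam := by rw [hsum]
    rw [hFl, Finset.sum_apply]
    rfl

lemma span_mono_vars {m m' : ℕ} (h : m ≤ m') {F : (ℕ → k) → A}
    (hF : F ∈ Submodule.span k (monoSet k A m)) : F ∈ Submodule.span k (monoSet k A m') := by
  refine Submodule.span_le.2 ?_ hF
  rintro G ⟨e, v, rfl⟩
  refine Submodule.subset_span ⟨fun r => if r < m then e r else 0, v, ?_⟩
  funext lam
  have key : (∏ r ∈ Finset.range m', lam r ^ (if r < m then e r else 0))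
      = ∏ r ∈ Finset.range m, lam r ^ e r := by
    rw [← Finset.prod_subset (Finset.range_subset_range.2 h)
      (fun r _ hr => by rw [if_neg (by rw [Finset.mem_range] at hr; omega), pow_zero])]
    exact Finset.prod_congr rfl fun r hr => by rw [if_pos (Finset.mem_range.1 hr)]
  dsimp only
  rw [key]

lemma span_shift {q s : ℕ} {F : (ℕ → k) → A}
    (hF : F ∈ Submodule.span k (monoSet k A q)) :
    (fun lam : ℕ → k => F (fun r => lam (r + s))) ∈ Submodule.span k (monoSet k A (s + q)) := by
  induction hF using Submodule.span_induction with
  | mem G hG =>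
    obtain ⟨e, v, rfl⟩ := hG
    refine Submodule.subset_span ⟨fun r => if s ≤ r then e (r - s) else 0, v, ?_⟩
    funext lam
    have key : (∏ r ∈ Finset.range (s + q), lam r ^ (if s ≤ r then e (r - s) else 0))
        = ∏ r ∈ Finset.range q, lam (r + s) ^ e r := by
      rw [Finset.prod_range_add (fun r => lam r ^ if s ≤ r then e (r - s) else 0) s q]
      have h1 : (∏ r ∈ Finset.range s, lam r ^ (if s ≤ r then e (r - s) else 0)) = 1 :=
        Finset.prod_eq_one (fun r hr => by
          rw [if_neg (by rw [Finset.mem_range] at hr; omega), pow_zero])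
      rw [h1, one_mul]
      refine Finset.prod_congr rfl fun r _ => ?_
      rw [if_pos (by omega : s ≤ s + r)]
      have e1 : s + r - s = r := by omega
      have e2 : s + r = r + s := by omega
      rw [e1, e2]
    dsimp only
    rw [key]
  | zero => exact Submodule.zero_mem _
  | add x y hx hy ihx ihy =>
    have h : (fun lam : ℕ → k => (x + y) (fun r => lam (r + s)))
        = (fun lam : ℕ → k => x (fun r => lam (r + s)))
          + (fun lam : ℕ → k => y (fun r => lam (r + s))) := rfl
    rw [h]; exact Submodule.add_mem _ ihx ihy
  | smul r x hx ihx =>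
    have h : (fun lam : ℕ → k => (r • x) (fun r' => lam (r' + s)))
        = r • (fun lam : ℕ → k => x (fun r' => lam (r' + s))) := rfl
    rw [h]; exact Submodule.smul_mem _ r ihx

lemma span_comp_linear {m : ℕ} (T : A →ₗ[k] A) {F : (ℕ → k) → A}
    (hF : F ∈ Submodule.span k (monoSet k A m)) :
    (fun lam => T (F lam)) ∈ Submodule.span k (monoSet k A m) := by
  induction hF using Submodule.span_induction with
  | mem G hG =>
    obtain ⟨e, v, rfl⟩ := hG
    refine Submodule.subset_span ⟨e, T v, ?_⟩
    funext lam
    exact map_smul T _ _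
  | zero =>
    have h : (fun lam : ℕ → k => T ((0 : (ℕ → k) → A) lam)) = 0 := by
      funext lam; exact map_zero T
    rw [h]; exact Submodule.zero_mem _
  | add x y hx hy ihx ihy =>
    have h : (fun lam : ℕ → k => T ((x + y) lam))
        = (fun lam : ℕ → k => T (x lam)) + (fun lam : ℕ → k => T (y lam)) := by
      funext lam; exact map_add T _ _
    rw [h]; exact Submodule.add_mem _ ihx ihy
  | smul r x hx ihx =>
    have h : (fun lam : ℕ → k => T ((r • x) lam)) = r • (fun lam : ℕ → k => T (x lam)) := by
      funext lam; exact map_smul T _ _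
    rw [h]; exact Submodule.smul_mem _ r ihx

lemma span_const {m : ℕ} (v : A) :
    (fun _ : ℕ → k => v) ∈ Submodule.span k (monoSet k A m) := by
  refine Submodule.subset_span ⟨fun _ => 0, v, ?_⟩
  funext lam
  simp

lemma span_smul_fun {m : ℕ} {p : (ℕ → k) → k} {F : (ℕ → k) → A}
    (hp : p ∈ Submodule.span k (monoSet k k m)) (hF : F ∈ Submodule.span k (monoSet k A m)) :
    (fun lam => p lam • F lam) ∈ Submodule.span k (monoSet k A m) := by
  induction hp using Submodule.span_induction with
  | mem q hq =>
    obtain ⟨e, cst, rfl⟩ := hq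
    induction hF using Submodule.span_induction with
    | mem G hG =>
      obtain ⟨e', v, rfl⟩ := hG
      refine Submodule.subset_span ⟨fun r => e r + e' r, cst • v, ?_⟩
      funext lam
      dsimp only
      have hprod : (∏ r ∈ range m, lam r ^ (e r + e' r))
          = (∏ r ∈ range m, lam r ^ e r) * ∏ r ∈ range m, lam r ^ e' r := by
        rw [← Finset.prod_mul_distrib]
        exact Finset.prod_congr rfl fun r _ => pow_add _ _ _
      rw [smul_eq_mul, smul_smul, smul_smul, hprod]
      congr 1
      ring
    | zero =>
      have h : (fun lam : ℕ → k =>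
          ((∏ r ∈ range m, lam r ^ e r) • cst) • (0 : (ℕ → k) → A) lam) = 0 := by
        funext lam; exact smul_zero _
      rw [h]; exact Submodule.zero_mem _
    | add x y hx hy ihx ihy =>
      have h : (fun lam : ℕ → k => ((∏ r ∈ range m, lam r ^ e r) • cst) • (x + y) lam)
          = (fun lam : ℕ → k => ((∏ r ∈ range m, lam r ^ e r) • cst) • x lam)
            + (fun lam : ℕ → k => ((∏ r ∈ range m, lam r ^ e r) • cst) • y lam) := by
        funext lam; exact smul_add _ _ _
      rw [h]; exact Submodule.add_mem _ ihx ihy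
    | smul r x hx ihx =>
      have h : (fun lam : ℕ → k => ((∏ r' ∈ range m, lam r' ^ e r') • cst) • (r • x) lam)
          = r • (fun lam : ℕ → k => ((∏ r' ∈ range m, lam r' ^ e r') • cst) • x lam) := by
        funext lam; exact smul_comm _ _ _
      rw [h]; exact Submodule.smul_mem _ r ihx
  | zero =>
    have h : (fun lam : ℕ → k => (0 : (ℕ → k) → k) lam • F lam) = 0 := by
      funext lam; exact zero_smul k _
    rw [h]; exact Submodule.zero_mem _
  | add x y hx hy ihx ihy =>
    have h : (fun lam : ℕ → k => (x + y) lam • F lam)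
        = (fun lam : ℕ → k => x lam • F lam) + (fun lam : ℕ → k => y lam • F lam) := by
      funext lam; exact add_smul _ _ _
    rw [h]; exact Submodule.add_mem _ ihx ihy
  | smul r x hx ihx =>
    have h : (fun lam : ℕ → k => (r • x) lam • F lam)
        = r • (fun lam : ℕ → k => x lam • F lam) := by
      funext lam; exact smul_assoc r (x lam) (F lam)
    rw [h]; exact Submodule.smul_mem _ r ihx

end SpanMach

section SpanMul

variable {k : Type*} [Field k]
variable {A : Type*} [AddCommGroup A] [Module k A]

lemma span_mono_scalar {m : ℕ} (e : ℕ → ℕ) :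
    (fun lam : ℕ → k => ∏ r ∈ Finset.range m, lam r ^ e r) ∈
      Submodule.span k (monoSet k k m) :=
  Submodule.subset_span ⟨e, 1, funext fun lam => by rw [smul_eq_mul, mul_one]⟩

lemma span_one {m : ℕ} : (fun _ : ℕ → k => (1 : k)) ∈ Submodule.span k (monoSet k k m) :=
  span_const 1

lemma span_mul_scalar {m : ℕ} {p q : (ℕ → k) → k}
    (hp : p ∈ Submodule.span k (monoSet k k m)) (hq : q ∈ Submodule.span k (monoSet k k m)) :
    (fun lam => p lam * q lam) ∈ Submodule.span k (monoSet k k m) :=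
  span_smul_fun hp hq

lemma span_pow_scalar {m : ℕ} {p : (ℕ → k) → k}
    (hp : p ∈ Submodule.span k (monoSet k k m)) (j : ℕ) :
    (fun lam => (p lam) ^ j) ∈ Submodule.span k (monoSet k k m) := by
  induction j with
  | zero =>
    have h : (fun lam : ℕ → k => (p lam) ^ 0) = fun _ => (1 : k) := by
      funext lam; rw [pow_zero]
    rw [h]; exact span_one
  | succ j ih =>
    have h : (fun lam : ℕ → k => (p lam) ^ (j + 1))
        = fun lam => p lam * (p lam) ^ j := by
      funext lam; rw [pow_succ']
    rw [h]; exact span_mul_scalar hp ih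

lemma span_lam {m j : ℕ} (h : j < m) :
    (fun lam : ℕ → k => lam j) ∈ Submodule.span k (monoSet k k m) := by
  refine Submodule.subset_span ⟨fun r => if r = j then 1 else 0, 1, ?_⟩
  funext lam
  dsimp only
  rw [smul_eq_mul, mul_one]
  rw [Finset.prod_eq_single j (fun r _ hr => by rw [if_neg hr, pow_zero])
    (fun hj => absurd (Finset.mem_range.2 h) hj)]
  rw [if_pos rfl, pow_one]

lemma span_sum_lam {m t : ℕ} (h : t ≤ m) :
    (fun lam : ℕ → k => ∑ j ∈ Finset.range t, lam j) ∈ Submodule.span k (monoSet k k m) := by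
  have heq : (fun lam : ℕ → k => ∑ j ∈ Finset.range t, lam j)
      = ∑ j ∈ Finset.range t, (fun lam : ℕ → k => lam j) := by
    funext lam; rw [Finset.sum_apply]
  rw [heq]
  exact Submodule.sum_mem _ fun j hj =>
    span_lam (lt_of_lt_of_le (Finset.mem_range.1 hj) h)

/-- The λ-product of polynomial families evaluated at a polynomial scalar is polynomial. -/
lemma span_mulconf (S : AssocConfAlg k A) {m : ℕ} {F G : (ℕ → k) → A} {s : (ℕ → k) → k}
    (hF : F ∈ Submodule.span k (monoSet k A m)) (hG : G ∈ Submodule.span k (monoSet k A m))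
    (hs : s ∈ Submodule.span k (monoSet k k m)) :
    (fun lam => S.mul (F lam) (G lam) (s lam)) ∈ Submodule.span k (monoSet k A m) := by
  induction hF using Submodule.span_induction with
  | mem Fg hFg =>
    obtain ⟨e, v, rfl⟩ := hFg
    have hcore : (fun lam => S.mul v (G lam) (s lam)) ∈ Submodule.span k (monoSet k A m) := by
      induction hG using Submodule.span_induction with
      | mem Gg hGg =>
        obtain ⟨e', w, rfl⟩ := hGg
        obtain ⟨N, vv, hN⟩ := hasRep_of_isPolyFun (S.poly v w)
        have key : (fun lam : ℕ → k =>
            S.mul v ((∏ r ∈ Finset.range m, lam r ^ e' r) • w) (s lam))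
            = fun lam : ℕ → k => (∏ r ∈ Finset.range m, lam r ^ e' r) •
                ∑ j ∈ Finset.range N, (s lam) ^ j • vv j := by
          funext lam
          have hNs : S.mul v w (s lam) = ∑ j ∈ Finset.range N, (s lam) ^ j • vv j := hN (s lam)
          rw [S.smul_right, hNs]
        rw [key]
        refine span_smul_fun (span_mono_scalar e') ?_
        have heq : (fun lam : ℕ → k => ∑ j ∈ Finset.range N, (s lam) ^ j • vv j)
            = ∑ j ∈ Finset.range N, (fun lam : ℕ → k => (s lam) ^ j • vv j) := by
          funext lam; rw [Finset.sum_apply]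
        rw [heq]
        exact Submodule.sum_mem _ fun j _ =>
          span_smul_fun (span_pow_scalar hs j) (span_const (vv j))
      | zero =>
        have h : (fun lam : ℕ → k => S.mul v ((0 : (ℕ → k) → A) lam) (s lam)) = 0 := by
          funext lam; exact mul_zero_right S v (s lam)
        rw [h]; exact Submodule.zero_mem _
      | add x y hx hy ihx ihy =>
        have h : (fun lam : ℕ → k => S.mul v ((x + y) lam) (s lam))
            = (fun lam : ℕ → k => S.mul v (x lam) (s lam))
              + (fun lam : ℕ → k => S.mul v (y lam) (s lam)) := by
          funext lam; exact S.add_right v (x lam) (y lam) (s lam)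
        rw [h]; exact Submodule.add_mem _ ihx ihy
      | smul r x hx ihx =>
        have h : (fun lam : ℕ → k => S.mul v ((r • x) lam) (s lam))
            = r • (fun lam : ℕ → k => S.mul v (x lam) (s lam)) := by
          funext lam; exact S.smul_right r v (x lam) (s lam)
        rw [h]; exact Submodule.smul_mem _ r ihx
    have h : (fun lam : ℕ → k =>
        S.mul ((fun lam' : ℕ → k => (∏ r ∈ Finset.range m, lam' r ^ e r) • v) lam)
          (G lam) (s lam))
        = fun lam : ℕ → k => (∏ r ∈ Finset.range m, lam r ^ e r) •
            S.mul v (G lam) (s lam) := by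
      funext lam; exact S.smul_left _ v (G lam) (s lam)
    rw [h]
    exact span_smul_fun (span_mono_scalar e) hcore
  | zero =>
    have h : (fun lam : ℕ → k => S.mul ((0 : (ℕ → k) → A) lam) (G lam) (s lam)) = 0 := by
      funext lam; exact mul_zero_left S (G lam) (s lam)
    rw [h]; exact Submodule.zero_mem _
  | add x y hx hy ihx ihy =>
    have h : (fun lam : ℕ → k => S.mul ((x + y) lam) (G lam) (s lam))
        = (fun lam : ℕ → k => S.mul (x lam) (G lam) (s lam))
          + (fun lam : ℕ → k => S.mul (y lam) (G lam) (s lam)) := by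
      funext lam; exact S.add_left (x lam) (y lam) (G lam) (s lam)
    rw [h]; exact Submodule.add_mem _ ihx ihy
  | smul r x hx ihx =>
    have h : (fun lam : ℕ → k => S.mul ((r • x) lam) (G lam) (s lam))
        = r • (fun lam : ℕ → k => S.mul (x lam) (G lam) (s lam)) := by
      funext lam; exact S.smul_left r (x lam) (G lam) (s lam)
    rw [h]; exact Submodule.smul_mem _ r ihx

end SpanMul

section IsULemmas

variable {k : Type*} [Field k]
variable {A : Type*} [AddCommGroup A] [Module k A]

lemma shift_update_lt {a : ℕ → A} {i m : ℕ} (x : A) (h : i < m) :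
    (fun r => Function.update a i x (r + m)) = fun r => a (r + m) :=
  funext fun r => by rw [Function.update_apply, if_neg (by omega)]

lemma shift_update_ge {a : ℕ → A} {i m : ℕ} (x : A) (h : m ≤ i) :
    (fun r => Function.update a i x (r + m)) = Function.update (fun r => a (r + m)) (i - m) x := by
  funext r
  rw [Function.update_apply, Function.update_apply]
  by_cases h1 : r + m = i
  · rw [if_pos h1, if_pos (by omega)]
  · rw [if_neg h1, if_neg (by omega)]

/-- `b ⊔ g` is a cochain of the same degree. -/
lemma isU_cup0L (S : AssocConfAlg k A) {q : ℕ} {g : CMap k A} (hg : IsU S.D q g) (b : A) :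
    IsU S.D q (cup0L S.mul b g) := by
  constructor
  · intro lam lam' a a' hlam ha
    simp only [cup0L]
    rw [hg.depends lam lam' a a' hlam ha]
  · intro lam a i hi x y
    simp only [cup0L]
    rw [hg.map_add lam a i hi x y, S.add_right]
  · intro lam a i hi r x
    simp only [cup0L]
    rw [hg.map_smul lam a i hi r x, S.smul_right]
  · intro a
    rw [isPolyIn_iff_mem_span]
    have hzero : (fun _ : ℕ → k => (0 : k)) ∈ Submodule.span k (monoSet k k q) := by
      have h : (fun _ : ℕ → k => (0 : k)) = 0 := rfl
      rw [h]; exact Submodule.zero_mem _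
    exact span_mulconf S (span_const b) (isPolyIn_iff_mem_span.1 (hg.poly a)) hzero
  · intro lam a i hi x
    simp only [cup0L]
    rw [hg.sesq lam a i hi x, mul_neg_right, S.smul_right]
  · intro lam a x
    simp only [cup0L]
    rw [hg.sesq_last lam a x, S.add_right, S.D_right, S.smul_right, zero_smul,
      add_zero]

/-- `z • φ` is a cochain. -/
lemma isU_zsmul (S : AssocConfAlg k A) {m : ℕ} {φ : CMap k A} (hφ : IsU S.D m φ) (z : ℤ) :
    IsU S.D m (fun lam a => z • φ lam a) := by
  constructor
  · intro lam lam' a a' hlam ha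
    rw [hφ.depends lam lam' a a' hlam ha]
  · intro lam a i hi x y
    rw [hφ.map_add lam a i hi x y, smul_add]
  · intro lam a i hi r x
    rw [hφ.map_smul lam a i hi r x, smul_comm]
  · intro a
    rw [isPolyIn_iff_mem_span]
    have h : (fun lam => z • φ lam a)
        = fun lam => (fun _ : ℕ → k => (z : k)) lam • (fun lam' => φ lam' a) lam := by
      funext lam
      rw [Int.cast_smul_eq_zsmul]
    rw [h]
    exact span_smul_fun (span_const ((z : k))) (isPolyIn_iff_mem_span.1 (hφ.poly a))
  · intro lam a i hi x
    rw [hφ.sesq lam a i hi x, smul_neg, smul_comm]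
  · intro lam a x
    rw [hφ.sesq_last lam a x, smul_add, map_zsmul, smul_comm]

/-- `f ⊔ b` is a cochain of the same degree. -/
lemma isU_cup0R (S : AssocConfAlg k A) [CharZero k] {p : ℕ} {f : CMap k A}
    (hf : IsU S.D p f) (b : A) :
    IsU S.D p (cup0R S.D S.mul f b) := by
  have hE : cup0R S.D S.mul f b = fun lam a => ENeg S b (f lam a) := rfl
  rw [hE]
  constructor
  · intro lam lam' a a' hlam ha
    rw [hf.depends lam lam' a a' hlam ha]
  · intro lam a i hi x y
    rw [hf.map_add lam a i hi x y, map_add]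
  · intro lam a i hi r x
    rw [hf.map_smul lam a i hi r x, map_smul]
  · intro a
    rw [isPolyIn_iff_mem_span]
    exact span_comp_linear (ENeg S b) (isPolyIn_iff_mem_span.1 (hf.poly a))
  · intro lam a i hi x
    rw [hf.sesq lam a i hi x, map_neg, map_smul]
  · intro lam a x
    rw [hf.sesq_last lam a x, map_add, map_smul, ENeg_D]

end IsULemmas

section IsUCup

variable {k : Type*} [Field k]
variable {A : Type*} [AddCommGroup A] [Module k A]

lemma isU_cup (S : AssocConfAlg k A) {p q : ℕ} {f g : CMap k A}
    (hf : IsU S.D p f) (hg : IsU S.D q g) :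
    IsU S.D (p + q + 1) (cup S.mul (p + 1) f g) := by
  constructor
  · -- depends
    intro lam lam' a a' hlam ha
    simp only [cup]
    rw [hf.depends lam lam' a a' (fun r hr => hlam r (by omega)) (fun r hr => ha r (by omega)),
      hg.depends _ _ _ _ (fun r hr => hlam (r + (p + 1)) (by omega))
        (fun r hr => ha (r + (p + 1)) (by omega)),
      Finset.sum_congr rfl (fun j hj => hlam j (by rw [Finset.mem_range] at hj; omega))]
  · -- map_add
    intro lam a i hi x y
    simp only [cup]
    by_cases hip : i < p + 1
    · rw [shift_update_lt (x + y) hip, shift_update_lt x hip, shift_update_lt y hip,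
        hf.map_add lam a i (by omega) x y, S.add_left]
    · rw [shift_update_ge (x + y) (by omega), shift_update_ge x (by omega),
        shift_update_ge y (by omega)]
      have h1 : ∀ z : A, f lam (Function.update a i z) = f lam a := fun z =>
        hf.depends _ _ _ _ (fun r hr => rfl) (fun r hr => by
          rw [Function.update_apply, if_neg (by omega)])
      rw [h1 (x + y), h1 x, h1 y, hg.map_add _ _ (i - (p + 1)) (by omega) x y, S.add_right]
  · -- map_smul
    intro lam a i hi r x
    simp only [cup]
    by_cases hip : i < p + 1
    · rw [shift_update_lt (r • x) hip, shift_update_lt x hip,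
        hf.map_smul lam a i (by omega) r x, S.smul_left]
    · rw [shift_update_ge (r • x) (by omega), shift_update_ge x (by omega)]
      have h1 : ∀ z : A, f lam (Function.update a i z) = f lam a := fun z =>
        hf.depends _ _ _ _ (fun r' hr => rfl) (fun r' hr => by
          rw [Function.update_apply, if_neg (by omega)])
      rw [h1 (r • x), h1 x, hg.map_smul _ _ (i - (p + 1)) (by omega) r x, S.smul_right]
  · -- poly
    intro a
    rw [isPolyIn_iff_mem_span]
    have h1 := span_mono_vars (by omega : p ≤ p + q + 1)
      (isPolyIn_iff_mem_span.1 (hf.poly a))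
    have h2 := span_shift (s := p + 1)
      (isPolyIn_iff_mem_span.1 (hg.poly (fun r => a (r + (p + 1)))))
    rw [show p + 1 + q = p + q + 1 from by omega] at h2
    have h3 := span_sum_lam (k := k) (by omega : p + 1 ≤ p + q + 1)
    exact span_mulconf S h1 h2 h3
  · -- sesq
    intro lam a i hi x
    simp only [cup]
    rcases lt_trichotomy i p with hip | rfl | hip
    · rw [shift_update_lt (S.D x) (by omega), shift_update_lt x (by omega),
        hf.sesq lam a i (by omega) x, mul_neg_left, S.smul_left]
    · rw [shift_update_lt (S.D x) (by omega), shift_update_lt x (by omega),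
        hf.sesq_last lam a x, S.add_left, S.D_left, S.smul_left, Finset.sum_range_succ,
        add_smul, neg_add]
      abel
    · rw [shift_update_ge (S.D x) (by omega), shift_update_ge x (by omega)]
      have h1 : ∀ z : A, f lam (Function.update a i z) = f lam a := fun z =>
        hf.depends _ _ _ _ (fun r hr => rfl) (fun r hr => by
          rw [Function.update_apply, if_neg (by omega)])
      rw [h1 (S.D x), h1 x,
        hg.sesq (fun r => lam (r + (p + 1))) (fun r => a (r + (p + 1)))
          (i - (p + 1)) (by omega) x,
        show i - (p + 1) + (p + 1) = i from by omega, mul_neg_right, S.smul_right]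
  · -- sesq_last
    intro lam a x
    simp only [cup]
    rw [shift_update_ge (S.D x) (by omega), shift_update_ge x (by omega)]
    have h1 : ∀ z : A, f lam (Function.update a (p + q + 1) z) = f lam a := fun z =>
      hf.depends _ _ _ _ (fun r hr => rfl) (fun r hr => by
        rw [Function.update_apply, if_neg (by omega)])
    rw [h1 (S.D x), h1 x, show p + q + 1 - (p + 1) = q from by omega,
      hg.sesq_last (fun r => lam (r + (p + 1))) (fun r => a (r + (p + 1))) x,
      S.add_right, S.D_right, S.smul_right]
    have hsum : ∑ j ∈ Finset.range (p + q + 1), lam j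
        = (∑ j ∈ Finset.range (p + 1), lam j)
          + ∑ j ∈ Finset.range q, lam (j + (p + 1)) := by
      rw [show p + q + 1 = (p + 1) + q from by omega, Finset.sum_range_add]
      congr 1
      exact Finset.sum_congr rfl fun j _ => by rw [Nat.add_comm]
    rw [hsum, add_smul]
    abel

end IsUCup

section Leibniz

variable {k : Type*} [Field k]
variable {A : Type*} [AddCommGroup A] [Module k A]

lemma sum_merge {i m : ℕ} (lam : ℕ → k) (h : i < m) :
    ∑ j ∈ Finset.range m,
      (if j < i then lam j else if j = i then lam i + lam (i + 1) else lam (j + 1))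
      = ∑ j ∈ Finset.range (m + 1), lam j := by
  induction m with
  | zero => omega
  | succ m ih =>
    rcases Nat.lt_succ_iff_lt_or_eq.1 h with h' | rfl
    · rw [Finset.sum_range_succ, ih h', if_neg (by omega), if_neg (by omega),
        Finset.sum_range_succ lam (m + 1)]
    · rw [Finset.sum_range_succ, if_neg (by omega), if_pos rfl,
        Finset.sum_range_succ lam (i + 1), Finset.sum_range_succ lam i,
        Finset.sum_congr rfl (fun j hj => if_pos (Finset.mem_range.1 hj))]
      abel

lemma cup_leibniz (S : AssocConfAlg k A) {m n : ℕ} (hm : 1 ≤ m) (hn : 1 ≤ n)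
    {f g : CMap k A} (hf : IsU S.D (m - 1) f) (lam : ℕ → k) (a : ℕ → A) :
    hdiff S.mul (m + n) (cup S.mul m f g) lam a
      = cup S.mul (m + 1) (hdiff S.mul m f) g lam a
        + ((-1 : ℤ) ^ m) • cup S.mul m f (hdiff S.mul n g) lam a := by
  simp only [hdiff, cup]
  rw [show (0 : ℕ) + m = m from by omega]
  have hGlam2 : (fun r => lam (r + 1 + m)) = fun r => lam (r + m + 1) := by
    funext r; congr 1; omega
  have hGa2 : (fun r => a (r + 1 + m)) = fun r => a (r + m + 1) := by
    funext r; congr 1; omega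
  have hGlam1 : (fun r => lam (r + (m + 1))) = fun r => lam (r + m + 1) := by
    funext r; rfl
  have hGa1 : (fun r => a (r + (m + 1))) = fun r => a (r + m + 1) := by
    funext r; rfl
  rw [hGlam2, hGa2, hGlam1, hGa1]
  -- last term of the LHS
  have hTlast : (-1 : ℤ) ^ (m + n + 1) •
      S.mul (S.mul (f lam a) (g (fun r => lam (r + m)) fun r => a (r + m))
        (∑ j ∈ Finset.range m, lam j)) (a (m + n)) (∑ j ∈ Finset.range (m + n), lam j)
      = (-1 : ℤ) ^ m • ((-1 : ℤ) ^ (n + 1) •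
          S.mul (f lam a) (S.mul (g (fun r => lam (r + m)) fun r => a (r + m)) (a (n + m))
            (∑ r ∈ Finset.range n, lam (r + m))) (∑ j ∈ Finset.range m, lam j)) := by
    rw [smul_smul, ← pow_add, show m + (n + 1) = m + n + 1 from by omega]
    congr 1
    have e1 : ∑ j ∈ Finset.range (m + n), lam j
        = (∑ j ∈ Finset.range m, lam j) + ∑ r ∈ Finset.range n, lam (r + m) := by
      rw [Finset.sum_range_add lam m n]
      congr 1
      exact Finset.sum_congr rfl fun j _ => congrArg lam (by omega)
    have e2 : a (m + n) = a (n + m) := congrArg a (by omega)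
    rw [e1, e2, S.assoc]
  rw [hTlast]
  -- first term of the LHS
  have hT0 : S.mul (a 0)
      (S.mul (f (fun r => lam (r + 1)) fun r => a (r + 1))
        (g (fun r => lam (r + m + 1)) fun r => a (r + m + 1))
        (∑ r ∈ Finset.range m, lam (r + 1))) (lam 0)
      = S.mul (S.mul (a 0) (f (fun r => lam (r + 1)) fun r => a (r + 1)) (lam 0))
          (g (fun r => lam (r + m + 1)) fun r => a (r + m + 1))
          (∑ j ∈ Finset.range (m + 1), lam j) := by
    have e1 : ∑ j ∈ Finset.range (m + 1), lam j
        = lam 0 + ∑ r ∈ Finset.range m, lam (r + 1) := by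
      rw [Finset.sum_range_succ' lam m]; exact add_comm _ _
    rw [e1, S.assoc]
  rw [hT0]
  -- split the middle sum of the LHS
  rw [Finset.sum_range_add (fun x => (-1 : ℤ) ^ (x + 1) •
    S.mul (f (fun r => if r < x then lam r else if r = x then lam x + lam (x + 1) else lam (r + 1))
        fun r => if r < x then a r else if r = x then S.mul (a x) (a (x + 1)) (lam x) else a (r + 1))
      (g (fun r => if r + m < x then lam (r + m)
            else if r + m = x then lam x + lam (x + 1) else lam (r + m + 1))
        fun r => if r + m < x then a (r + m)
            else if r + m = x then S.mul (a x) (a (x + 1)) (lam x) else a (r + m + 1))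
      (∑ r ∈ Finset.range m,
        if r < x then lam r else if r = x then lam x + lam (x + 1) else lam (r + 1))) m n]
  -- terms with merge position inside f
  have hSm : ∀ i ∈ Finset.range m, (-1 : ℤ) ^ (i + 1) •
      S.mul (f (fun r => if r < i then lam r else if r = i then lam i + lam (i + 1) else lam (r + 1))
          fun r => if r < i then a r else if r = i then S.mul (a i) (a (i + 1)) (lam i) else a (r + 1))
        (g (fun r => if r + m < i then lam (r + m)
              else if r + m = i then lam i + lam (i + 1) else lam (r + m + 1))
          fun r => if r + m < i then a (r + m)
              else if r + m = i then S.mul (a i) (a (i + 1)) (lam i) else a (r + m + 1))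
        (∑ r ∈ Finset.range m,
          if r < i then lam r else if r = i then lam i + lam (i + 1) else lam (r + 1))
      = (-1 : ℤ) ^ (i + 1) •
        S.mul (f (fun r => if r < i then lam r else if r = i then lam i + lam (i + 1) else lam (r + 1))
            fun r => if r < i then a r else if r = i then S.mul (a i) (a (i + 1)) (lam i) else a (r + 1))
          (g (fun r => lam (r + m + 1)) fun r => a (r + m + 1))
          (∑ j ∈ Finset.range (m + 1), lam j) := by
    intro i hi
    have him : i < m := Finset.mem_range.1 hi
    have e1 : (fun r => if r + m < i then lam (r + m)
        else if r + m = i then lam i + lam (i + 1) else lam (r + m + 1))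
        = fun r => lam (r + m + 1) := by
      funext r; rw [if_neg (by omega), if_neg (by omega)]
    have e2 : (fun r => if r + m < i then a (r + m)
        else if r + m = i then S.mul (a i) (a (i + 1)) (lam i) else a (r + m + 1))
        = fun r => a (r + m + 1) := by
      funext r; rw [if_neg (by omega), if_neg (by omega)]
    rw [e1, e2, sum_merge lam him]
  rw [Finset.sum_congr rfl hSm]
  -- terms with merge position inside g
  have hSn : ∀ i ∈ Finset.range n, (-1 : ℤ) ^ (m + i + 1) •
      S.mul (f (fun r => if r < m + i then lam r
              else if r = m + i then lam (m + i) + lam (m + i + 1) else lam (r + 1))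
          fun r => if r < m + i then a r
              else if r = m + i then S.mul (a (m + i)) (a (m + i + 1)) (lam (m + i)) else a (r + 1))
        (g (fun r => if r + m < m + i then lam (r + m)
              else if r + m = m + i then lam (m + i) + lam (m + i + 1) else lam (r + m + 1))
          fun r => if r + m < m + i then a (r + m)
              else if r + m = m + i then S.mul (a (m + i)) (a (m + i + 1)) (lam (m + i))
              else a (r + m + 1))
        (∑ r ∈ Finset.range m, if r < m + i then lam r
            else if r = m + i then lam (m + i) + lam (m + i + 1) else lam (r + 1))
      = (-1 : ℤ) ^ m • ((-1 : ℤ) ^ (i + 1) •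
          S.mul (f lam a)
            (g (fun r => if r < i then lam (r + m)
                  else if r = i then lam (i + m) + lam (i + 1 + m) else lam (r + 1 + m))
              fun r => if r < i then a (r + m)
                  else if r = i then S.mul (a (i + m)) (a (i + 1 + m)) (lam (i + m))
                  else a (r + 1 + m))
            (∑ j ∈ Finset.range m, lam j)) := by
    intro i hi
    rw [smul_smul, ← pow_add, show m + (i + 1) = m + i + 1 from by omega]
    have ef : f (fun r => if r < m + i then lam r
          else if r = m + i then lam (m + i) + lam (m + i + 1) else lam (r + 1))
        (fun r => if r < m + i then a r
          else if r = m + i then S.mul (a (m + i)) (a (m + i + 1)) (lam (m + i)) else a (r + 1))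
        = f lam a :=
      hf.depends _ _ _ _ (fun r hr => by rw [if_pos (by omega)])
        (fun r hr => by rw [if_pos (by omega)])
    have eg1 : (fun r => if r + m < m + i then lam (r + m)
          else if r + m = m + i then lam (m + i) + lam (m + i + 1) else lam (r + m + 1))
        = fun r => if r < i then lam (r + m)
            else if r = i then lam (i + m) + lam (i + 1 + m) else lam (r + 1 + m) := by
      funext r
      rcases lt_trichotomy r i with h1 | h1 | h1
      · rw [if_pos (by omega), if_pos h1]
      · subst h1
        rw [if_neg (by omega), if_pos (by omega), if_neg (lt_irrefl r), if_pos rfl,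
          show r + m = m + r from by omega, show r + 1 + m = m + r + 1 from by omega]
      · rw [if_neg (by omega), if_neg (by omega), if_neg (by omega), if_neg (by omega),
          show r + 1 + m = r + m + 1 from by omega]
    have eg2 : (fun r => if r + m < m + i then a (r + m)
          else if r + m = m + i then S.mul (a (m + i)) (a (m + i + 1)) (lam (m + i))
          else a (r + m + 1))
        = fun r => if r < i then a (r + m)
            else if r = i then S.mul (a (i + m)) (a (i + 1 + m)) (lam (i + m))
            else a (r + 1 + m) := by
      funext r
      rcases lt_trichotomy r i with h1 | h1 | h1
      · rw [if_pos (by omega), if_pos h1]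
      · subst h1
        rw [if_neg (by omega), if_pos (by omega), if_neg (lt_irrefl r), if_pos rfl,
          show r + m = m + r from by omega, show r + 1 + m = m + r + 1 from by omega]
      · rw [if_neg (by omega), if_neg (by omega), if_neg (by omega), if_neg (by omega),
          show r + 1 + m = r + m + 1 from by omega]
    have eSig : (∑ r ∈ Finset.range m, if r < m + i then lam r
          else if r = m + i then lam (m + i) + lam (m + i + 1) else lam (r + 1))
        = ∑ j ∈ Finset.range m, lam j :=
      Finset.sum_congr rfl fun j hj => if_pos (by rw [Finset.mem_range] at hj; omega)
    rw [ef, eg1, eg2, eSig]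
  rw [Finset.sum_congr rfl hSn]
  -- distribute the RHS
  rw [S.add_left, S.add_left, mul_sum_left,
    Finset.sum_congr rfl (fun i (_ : i ∈ Finset.range m) => mul_zsmul_left S ((-1 : ℤ) ^ (i + 1))
      (f (fun r => if r < i then lam r else if r = i then lam i + lam (i + 1) else lam (r + 1))
        fun r => if r < i then a r else if r = i then S.mul (a i) (a (i + 1)) (lam i) else a (r + 1))
      (g (fun r => lam (r + m + 1)) fun r => a (r + m + 1)) (∑ j ∈ Finset.range (m + 1), lam j)),
    mul_zsmul_left]
  -- the extremal A-term via associativity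
  have hAL : (-1 : ℤ) ^ (m + 1) •
      S.mul (S.mul (f lam a) (a m) (∑ j ∈ Finset.range m, lam j))
        (g (fun r => lam (r + m + 1)) fun r => a (r + m + 1)) (∑ j ∈ Finset.range (m + 1), lam j)
      = -((-1 : ℤ) ^ m • S.mul (f lam a)
          (S.mul (a m) (g (fun r => lam (r + m + 1)) fun r => a (r + m + 1)) (lam m))
          (∑ j ∈ Finset.range m, lam j)) := by
    rw [Finset.sum_range_succ lam m, S.assoc, pow_succ, mul_smul, neg_one_zsmul, smul_neg]
  rw [hAL]
  rw [S.add_right, S.add_right, mul_sum_right,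
    Finset.sum_congr rfl (fun i (_ : i ∈ Finset.range n) => mul_zsmul_right S ((-1 : ℤ) ^ (i + 1))
      (f lam a)
      (g (fun r => if r < i then lam (r + m)
            else if r = i then lam (i + m) + lam (i + 1 + m) else lam (r + 1 + m))
        fun r => if r < i then a (r + m)
            else if r = i then S.mul (a (i + m)) (a (i + 1 + m)) (lam (i + m))
            else a (r + 1 + m)) (∑ j ∈ Finset.range m, lam j)),
    mul_zsmul_right, smul_add, smul_add, Finset.smul_sum]
  abel

end Leibniz

section Leibniz0

variable {k : Type*} [Field k] [CharZero k]
variable {A : Type*} [AddCommGroup A] [Module k A]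

lemma cup0L_leibniz (S : AssocConfAlg k A) {n : ℕ} (hn : 1 ≤ n) (b : A) (g : CMap k A)
    (lam : ℕ → k) (a : ℕ → A) :
    hdiff S.mul n (cup0L S.mul b g) lam a
      = cup S.mul 1 (hdiff0 S.D S.mul b) g lam a
        + cup0L S.mul b (hdiff S.mul n g) lam a := by
  simp only [hdiff, cup, cup0L, hdiff0]
  have hEN : ∀ u : A, evalNegD S.D (fun x => S.mul u b x) = ENeg S b u := fun u => rfl
  simp only [hEN]
  rw [Finset.sum_range_one lam]
  rw [mul_sub_left, mul_ENeg_left]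
  have h2 : S.mul (S.mul b (a 0) 0) (g (fun r => lam (r + 1)) fun r => a (r + 1)) (lam 0)
      = S.mul b (S.mul (a 0) (g (fun r => lam (r + 1)) fun r => a (r + 1)) (lam 0)) 0 := by
    have h := S.assoc b (a 0) (g (fun r => lam (r + 1)) fun r => a (r + 1)) 0 (lam 0)
    rwa [zero_add] at h
  rw [h2]
  rw [S.add_right, S.add_right, mul_sum_right,
    Finset.sum_congr rfl (fun i (_ : i ∈ Finset.range n) => mul_zsmul_right S ((-1 : ℤ) ^ (i + 1)) b
      (g (fun r => if r < i then lam r else if r = i then lam i + lam (i + 1) else lam (r + 1))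
        fun r => if r < i then a r else if r = i then S.mul (a i) (a (i + 1)) (lam i) else a (r + 1))
      0),
    mul_zsmul_right]
  have h3 : S.mul (S.mul b (g lam a) 0) (a n) (∑ j ∈ Finset.range n, lam j)
      = S.mul b (S.mul (g lam a) (a n) (∑ j ∈ Finset.range n, lam j)) 0 := by
    have h := S.assoc b (g lam a) (a n) 0 (∑ j ∈ Finset.range n, lam j)
    rwa [zero_add] at h
  rw [h3]
  abel

lemma cup0R_leibniz (S : AssocConfAlg k A) {m : ℕ} (hm : 1 ≤ m) (f : CMap k A) (b : A)
    (lam : ℕ → k) (a : ℕ → A) :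
    hdiff S.mul m (cup0R S.D S.mul f b) lam a
      = cup0R S.D S.mul (hdiff S.mul m f) b lam a
        + ((-1 : ℤ) ^ m) • cup S.mul m f (hdiff0 S.D S.mul b) lam a := by
  simp only [hdiff, cup, cup0R, hdiff0]
  have hEN : ∀ u : A, evalNegD S.D (fun x => S.mul u b x) = ENeg S b u := fun u => rfl
  simp only [hEN]
  rw [show (0 : ℕ) + m = m from by omega]
  rw [map_add (ENeg S b), map_add (ENeg S b), map_sum (ENeg S b),
    Finset.sum_congr rfl (fun i (_ : i ∈ Finset.range m) => map_zsmul (ENeg S b) ((-1 : ℤ) ^ (i + 1))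
      (f (fun r => if r < i then lam r else if r = i then lam i + lam (i + 1) else lam (r + 1))
        fun r => if r < i then a r else if r = i then S.mul (a i) (a (i + 1)) (lam i) else a (r + 1))),
    map_zsmul (ENeg S b)]
  rw [mul_ENeg_right, mul_ENeg_left, mul_sub_right, smul_sub, mul_ENeg_right]
  have hsign : ∀ X : A, (-1 : ℤ) ^ (m + 1) • X = -((-1 : ℤ) ^ m • X) := fun X => by
    rw [pow_succ, mul_smul, neg_one_zsmul, smul_neg]
  rw [hsign, hsign]
  abel

end Leibniz0

section Assembly

variable {k : Type*} [Field k] [CharZero k]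
variable {A : Type*} [AddCommGroup A] [Module k A]

lemma hdiff0_zero_forall (S : AssocConfAlg k A) {b : A} (hb : hdiff0 S.D S.mul b = 0) :
    ∀ u : A, ENeg S b u = S.mul b u 0 := by
  intro u
  have h := congrFun (congrFun hb (fun _ => (0 : k))) (fun _ => u)
  simp only [hdiff0, Pi.zero_apply] at h
  exact sub_eq_zero.1 h

lemma cup0R_eq_cup0L (S : AssocConfAlg k A) {b : A} (hb : hdiff0 S.D S.mul b = 0)
    (f : CMap k A) : cup0R S.D S.mul f b = cup0L S.mul b f := by
  funext lam a
  simp only [cup0R, cup0L]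
  exact hdiff0_zero_forall S hb (f lam a)

lemma hdiff_zsmul (S : AssocConfAlg k A) (nn : ℕ) (z : ℤ) (ψ : CMap k A) :
    hdiff S.mul nn (fun lam a => z • ψ lam a)
      = fun lam a => z • hdiff S.mul nn ψ lam a := by
  funext lam a
  simp only [hdiff]
  rw [mul_zsmul_right, mul_zsmul_left, smul_add, smul_add, Finset.smul_sum]
  congr 1
  · congr 1
    exact Finset.sum_congr rfl fun i _ => smul_comm _ _ _
  · exact smul_comm _ _ _

/-- cup with the zero cochain (on the left, `m ≥ 1`) vanishes. -/
lemma cup_zero_left (S : AssocConfAlg k A) (m : ℕ) (g : CMap k A) (lam : ℕ → k) (a : ℕ → A) :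
    cup S.mul m (0 : CMap k A) g lam a = 0 := by
  simp only [cup, Pi.zero_apply]
  exact mul_zero_left S _ _

lemma cup_zero_right (S : AssocConfAlg k A) (m : ℕ) (f : CMap k A) (lam : ℕ → k) (a : ℕ → A) :
    cup S.mul m f (0 : CMap k A) lam a = 0 := by
  simp only [cup, Pi.zero_apply]
  exact mul_zero_right S _ _

lemma cup0L_zero (S : AssocConfAlg k A) (b : A) (lam : ℕ → k) (a : ℕ → A) :
    cup0L S.mul b (0 : CMap k A) lam a = 0 := by
  simp only [cup0L, Pi.zero_apply]
  exact mul_zero_right S _ _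

lemma cup0R_zero (S : AssocConfAlg k A) (b : A) (lam : ℕ → k) (a : ℕ → A) :
    cup0R S.D S.mul (0 : CMap k A) b lam a = 0 := by
  have h : cup0R S.D S.mul (0 : CMap k A) b lam a = ENeg S b ((0 : CMap k A) lam a) := rfl
  rw [h, Pi.zero_apply, Pi.zero_apply, map_zero]

/-- `b ⊔ ·` preserves cocycles (`d₀ b = 0`). -/
lemma cup0L_cocycle (S : AssocConfAlg k A) {b : A} (hb : hdiff0 S.D S.mul b = 0)
    {n : ℕ} (hn : 1 ≤ n) {g : CMap k A} (hdg : hdiff S.mul n g = 0) :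
    hdiff S.mul n (cup0L S.mul b g) = 0 := by
  funext lam a
  have h := cup0L_leibniz S hn b g lam a
  rw [hb, hdg] at h
  rw [h, cup_zero_left S 1 g lam a, cup0L_zero S b lam a, add_zero]
  simp

/-- `b ⊔ ·` preserves coboundaries (`d₀ b = 0`). -/
lemma cup0L_cobound (S : AssocConfAlg k A) {b : A} (hb : hdiff0 S.D S.mul b = 0)
    {n : ℕ} (hn : 1 ≤ n) {g : CMap k A} (hcg : IsCoboundary S.D S.mul n g) :
    IsCoboundary S.D S.mul n (cup0L S.mul b g) := by
  have hbu := hdiff0_zero_forall S hb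
  obtain ⟨q, rfl⟩ : ∃ q, n = q + 1 := ⟨n - 1, by omega⟩
  rcases q with _ | q'
  · obtain ⟨b', rfl⟩ := hcg
    refine ⟨S.mul b b' 0, ?_⟩
    funext lam a
    simp only [cup0L, hdiff0]
    have hEN : ∀ (u c : A), evalNegD S.D (fun x => S.mul u c x) = ENeg S c u :=
      fun u c => rfl
    rw [hEN (a 0) b', hEN (a 0) (S.mul b b' 0), mul_sub_right, mul_ENeg_right, ← hbu (a 0)]
    have h1 : ENeg S b' (ENeg S b (a 0)) = ENeg S (S.mul b b' 0) (a 0) := by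
      have h2 : (fun x => S.mul (ENeg S b (a 0)) b' x)
          = fun x => S.mul (a 0) (S.mul b b' 0) x := by
        funext x
        exact mul_ENeg_left S (a 0) b b' x
      have h3 : ENeg S b' (ENeg S b (a 0))
          = evalNegD S.D (fun x => S.mul (ENeg S b (a 0)) b' x) := rfl
      rw [h3, h2]
      rfl
    rw [h1]
    have h4 : S.mul b (S.mul b' (a 0) 0) 0 = S.mul (S.mul b b' 0) (a 0) 0 := by
      have h := S.assoc b b' (a 0) 0 0
      rw [zero_add] at h
      exact h.symm
    rw [h4]
  · obtain ⟨ψ, hψU, rfl⟩ := hcg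
    refine ⟨cup0L S.mul b ψ, isU_cup0L S hψU b, ?_⟩
    funext lam a
    have h := cup0L_leibniz S (by omega : 1 ≤ q' + 1) b ψ lam a
    rw [hb, cup_zero_left S 1 ψ lam a, zero_add] at h
    exact h.symm

end Assembly

/-- Proposition 4.1.  Let `A` be an associative conformal algebra.
The cup product on Hochschild cochains maps cocycles to cocycles and
(cocycle, coboundary) pairs to coboundaries, hence induces a well-defined product `⊔`
on Hochschild cohomology such that `(⊕_{i ≥ 0} HH^i(A), ⊔)` is a graded associative
algebra.  (Classes of degree `0` are represented by `b ∈ A` with `d₀(b) = 0`.) -/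
theorem hochschild_cup_on_cohomology {k A : Type*} [Field k] [CharZero k]
    [AddCommGroup A] [Module k A] (S : AssocConfAlg k A) :
    -- m, n ≥ 1: closure, cocycles to cocycles, coboundary pairs to coboundaries
    (∀ m n : ℕ, 1 ≤ m → 1 ≤ n → ∀ f g : CMap k A,
      IsU S.D (m - 1) f → IsU S.D (n - 1) g →
      IsU S.D (m + n - 1) (cup S.mul m f g) ∧
      (hdiff S.mul m f = 0 → hdiff S.mul n g = 0 →
        hdiff S.mul (m + n) (cup S.mul m f g) = 0) ∧
      (hdiff S.mul n g = 0 → IsCoboundary S.D S.mul m f →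
        IsCoboundary S.D S.mul (m + n) (cup S.mul m f g)) ∧
      (hdiff S.mul m f = 0 → IsCoboundary S.D S.mul n g →
        IsCoboundary S.D S.mul (m + n) (cup S.mul m f g))) ∧
    -- cup with a degree-0 cocycle on the left
    (∀ n : ℕ, 1 ≤ n → ∀ (b : A) (g : CMap k A), IsU S.D (n - 1) g →
      hdiff0 S.D S.mul b = 0 →
      IsU S.D (n - 1) (cup0L S.mul b g) ∧
      (hdiff S.mul n g = 0 → hdiff S.mul n (cup0L S.mul b g) = 0) ∧
      (IsCoboundary S.D S.mul n g → IsCoboundary S.D S.mul n (cup0L S.mul b g))) ∧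
    -- cup with a degree-0 cocycle on the right
    (∀ m : ℕ, 1 ≤ m → ∀ (f : CMap k A) (b : A), IsU S.D (m - 1) f →
      hdiff0 S.D S.mul b = 0 →
      IsU S.D (m - 1) (cup0R S.D S.mul f b) ∧
      (hdiff S.mul m f = 0 → hdiff S.mul m (cup0R S.D S.mul f b) = 0) ∧
      (IsCoboundary S.D S.mul m f → IsCoboundary S.D S.mul m (cup0R S.D S.mul f b))) ∧
    -- associativity of the induced product (on cocycles)
    (∀ m n p : ℕ, 1 ≤ m → 1 ≤ n → 1 ≤ p → ∀ f g h : CMap k A,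
      IsU S.D (m - 1) f → IsU S.D (n - 1) g → IsU S.D (p - 1) h →
      hdiff S.mul m f = 0 → hdiff S.mul n g = 0 → hdiff S.mul p h = 0 →
      cup S.mul (m + n) (cup S.mul m f g) h = cup S.mul m f (cup S.mul n g h)) := by
  refine ⟨?_, ?_, ?_, ?_⟩
  · -- degrees ≥ 1
    intro m n hm hn f g hf hg
    obtain ⟨p, rfl⟩ : ∃ p, m = p + 1 := ⟨m - 1, by omega⟩
    obtain ⟨q, rfl⟩ : ∃ q, n = q + 1 := ⟨n - 1, by omega⟩
    simp only [Nat.add_sub_cancel] at hf hg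
    refine ⟨?_, ?_, ?_, ?_⟩
    · -- closure
      rw [show p + 1 + (q + 1) - 1 = p + q + 1 from by omega]
      exact isU_cup S hf hg
    · -- cocycles to cocycles
      intro hdf hdg
      funext lam a
      have h := cup_leibniz S (by omega : 1 ≤ p + 1) (by omega : 1 ≤ q + 1) (f := f) (g := g) hf lam a
      rw [hdf, hdg] at h
      rw [h, cup_zero_left S (p + 1 + 1) g lam a, cup_zero_right S (p + 1) f lam a,
        smul_zero, add_zero]
      simp
    · -- coboundary on the left
      intro hdg hcf
      rcases p with _ | p'
      · obtain ⟨b, rfl⟩ := hcf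
        rw [show 0 + 1 + (q + 1) = q + 2 from by omega]
        refine ⟨cup0L S.mul b g, isU_cup0L S hg b, ?_⟩
        funext lam a
        have h := cup0L_leibniz S (by omega : 1 ≤ q + 1) b g lam a
        rw [hdg, cup0L_zero S b lam a, add_zero] at h
        exact h.symm
      · obtain ⟨ψ, hψU, rfl⟩ := hcf
        rw [show p' + 1 + 1 + (q + 1) = (p' + q + 1) + 2 from by omega]
        refine ⟨cup S.mul (p' + 1) ψ g, isU_cup S hψU hg, ?_⟩
        funext lam a
        have h := cup_leibniz S (by omega : 1 ≤ p' + 1) (by omega : 1 ≤ q + 1)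
          (f := ψ) (g := g) hψU lam a
        rw [hdg, cup_zero_right S (p' + 1) ψ lam a, smul_zero, add_zero] at h
        rw [show p' + q + 1 + 1 = p' + 1 + (q + 1) from by omega]
        exact h.symm
    · -- coboundary on the right
      intro hdf hcg
      rcases q with _ | q'
      · obtain ⟨b, rfl⟩ := hcg
        rw [show p + 1 + (0 + 1) = p + 2 from by omega]
        refine ⟨(fun lam a => ((-1 : ℤ) ^ (p + 1)) • cup0R S.D S.mul f b lam a),
          isU_zsmul S (isU_cup0R S hf b) _, ?_⟩
        funext lam a
        simp only [hdiff_zsmul]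
        have h := cup0R_leibniz S (by omega : 1 ≤ p + 1) f b lam a
        rw [hdf, cup0R_zero S b lam a, zero_add] at h
        rw [h, smul_smul, ← pow_add, Even.neg_one_pow ⟨p + 1, by ring⟩, one_smul]
      · obtain ⟨ρ, hρU, rfl⟩ := hcg
        rw [show p + 1 + (q' + 1 + 1) = (p + q' + 1) + 2 from by omega]
        refine ⟨(fun lam a => ((-1 : ℤ) ^ (p + 1)) • cup S.mul (p + 1) f ρ lam a),
          isU_zsmul S (isU_cup S hf hρU) _, ?_⟩
        funext lam a
        simp only [hdiff_zsmul]
        have h := cup_leibniz S (by omega : 1 ≤ p + 1) (by omega : 1 ≤ q' + 1)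
          (f := f) (g := ρ) hf lam a
        rw [hdf, cup_zero_left S (p + 1 + 1) ρ lam a, zero_add] at h
        rw [show p + q' + 1 + 1 = p + 1 + (q' + 1) from by omega, h, smul_smul, ← pow_add,
          Even.neg_one_pow ⟨p + 1, by ring⟩, one_smul]
  · -- cup with a degree-0 cocycle on the left
    intro n hn b g hg hb
    exact ⟨isU_cup0L S hg b, fun hdg => cup0L_cocycle S hb hn hdg,
      fun hcg => cup0L_cobound S hb hn hcg⟩
  · -- cup with a degree-0 cocycle on the right
    intro m hm f b hf hb
    have hRL := cup0R_eq_cup0L S hb f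
    refine ⟨?_, ?_, ?_⟩
    · rw [hRL]; exact isU_cup0L S hf b
    · intro hdf
      rw [hRL]
      exact cup0L_cocycle S hb hm hdf
    · intro hcf
      rw [hRL]
      exact cup0L_cobound S hb hm hcf
  · -- associativity
    intro m n p hm hn hp f g h _ _ _ _ _ _
    funext lam a
    simp only [cup]
    have e1 : ∑ j ∈ Finset.range (m + n), lam j
        = (∑ j ∈ Finset.range m, lam j) + ∑ j ∈ Finset.range n, lam (j + m) := by
      rw [Finset.sum_range_add lam m n]
      congr 1
      exact Finset.sum_congr rfl fun j _ => congrArg lam (by omega)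
    have e2 : (fun r => lam (r + (m + n))) = fun r => lam (r + n + m) := by
      funext r; congr 1; omega
    have e3 : (fun r => a (r + (m + n))) = fun r => a (r + n + m) := by
      funext r; congr 1; omega
    rw [e1, e2, e3, S.assoc]
end

section
/- Let A be an associative conformal algebra. For any f ∈ C^m(A,A) and g ∈ C^n(A,A) with m, n ≥ 1, the following homotopy formula holds on cochains: f • d_n(g) + (−1)^{n−1} d_m(f) • g − d_{m+n−1}(f • g) = (−1)^{n−1}(g ⊔ f − (−1)^{mn} f ⊔ g). -/
open Finset

variable {k : Type*} [Field k]
variable {A : Type*} [AddCommGroup A] [Module k A]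

set_option linter.unusedSectionVars false
section Lems
variable {k : Type*} [Field k] {A : Type*} [AddCommGroup A] [Module k A]

lemma neg_one_pow_congr' {a b : ℕ} (h : a % 2 = b % 2) : ((-1:ℤ))^a = (-1)^b := by
  rw [← Nat.div_add_mod a 2, ← Nat.div_add_mod b 2, pow_add, pow_add, pow_mul, pow_mul]
  simp [h]

lemma bulletAt_apply (n i : ℕ) (f g : CMap k A) (lam : ℕ → k) (a : ℕ → A) :
    bulletAt n i f g lam a
      = f (fun r => if r < i then lam r
            else if r = i then ∑ t ∈ Finset.range (n + 1), lam (i + t)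
            else lam (r + n))
          (Function.update (fun r => if r < i then a r else a (r + n)) i
            (g (fun t => lam (i + t)) (fun t => a (i + t)))) := by
  unfold bulletAt
  congr 1
  funext r
  rcases eq_or_ne r i with rfl | hr
  · simp
  · rcases lt_or_gt_of_ne hr with h | h
    · simp [Function.update_apply, hr, h]
    · simp [Function.update_apply, hr, not_lt_of_gt h]

/-- additivity of `f` in argument slot `i`. -/
def AddIn (i : ℕ) (f : CMap k A) : Prop :=
  ∀ lam a (x y : A), f lam (Function.update a i (x + y))
      = f lam (Function.update a i x) + f lam (Function.update a i y)

lemma AddIn.expand {i : ℕ} {f : CMap k A} (hf : AddIn i f) (lam : ℕ → k) (a : ℕ → A)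
    {ι κ : Type*} (T : Finset ι) (U : Finset κ) (c : ι → ℤ) (d : κ → ℤ)
    (v : ι → A) (w : κ → A) (z : ℤ) :
    f lam (Function.update a i (z • (∑ s ∈ T, c s • v s) - ∑ s ∈ U, d s • w s))
      = z • (∑ s ∈ T, c s • f lam (Function.update a i (v s)))
        - ∑ s ∈ U, d s • f lam (Function.update a i (w s)) := by
  let h : A →+ A := AddMonoidHom.mk' (fun y => f lam (Function.update a i y))
    (fun x y => hf lam a x y)
  show h _ = _
  rw [map_sub, map_zsmul, map_sum, map_sum]
  simp only [map_zsmul, h, AddMonoidHom.mk'_apply]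

end Lems

lemma AddIn.sum {i : ℕ} {f : CMap k A} (hf : AddIn i f) (lam : ℕ → k) (a : ℕ → A)
    {ι : Type*} (T : Finset ι) (c : ι → ℤ) (v : ι → A) :
    f lam (Function.update a i (∑ s ∈ T, c s • v s))
      = ∑ s ∈ T, c s • f lam (Function.update a i (v s)) := by
  let h : A →+ A := AddMonoidHom.mk' (fun y => f lam (Function.update a i y))
    (fun x y => hf lam a x y)
  show h _ = _
  rw [map_sum]
  simp only [map_zsmul, h, AddMonoidHom.mk'_apply]

lemma sum_shift_split (lam : ℕ → k) (i s n l : ℕ) (hs : s ≤ n) :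
    (∑ t ∈ Finset.range (n+1), (if t < s then lam (i+t)
        else if t = s then ∑ u ∈ Finset.range (l+1), lam (i+s+u)
        else lam (i+t+l)))
      = ∑ t ∈ Finset.range (n+l+1), lam (i+t) := by
  induction n, hs using Nat.le_induction with
  | base =>
    rw [Finset.sum_range_succ, if_neg (lt_irrefl s), if_pos rfl]
    have h1 : s + l + 1 = s + (l+1) := by omega
    rw [h1]
    conv_rhs => rw [Finset.sum_range_add]
    congr 1
    · exact Finset.sum_congr rfl fun t ht => by
        rw [if_pos (Finset.mem_range.mp ht)]
    · exact Finset.sum_congr rfl fun u _ => by rw [← Nat.add_assoc]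
  | succ n hn ih =>
    rw [Finset.sum_range_succ, if_neg (by omega), if_neg (by omega), ih]
    have h1 : n + 1 + l + 1 = (n + l + 1) + 1 := by omega
    rw [h1]
    conv_rhs => rw [Finset.sum_range_succ]
    have : i + (n+1) + l = i + (n + l + 1) := by omega
    rw [this]

lemma bulletAt_nest (n l i s : ℕ) (hs : s ≤ n) (f g h : CMap k A) :
    bulletAt l (i+s) (bulletAt n i f g) h = bulletAt (n+l) i f (bulletAt l s g h) := by
  funext lam a
  unfold bulletAt
  congr 1
  · funext r
    beta_reduce
    rcases lt_trichotomy r i with hri | heq | hri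
    · rw [if_pos (show r < i + s by omega), if_pos hri, if_pos hri]
    · subst heq
      rw [if_neg (lt_irrefl r), if_pos rfl, if_neg (lt_irrefl r), if_pos rfl,
        ← sum_shift_split lam r s n l hs]
      refine Finset.sum_congr rfl fun t ht => ?_
      rcases lt_trichotomy t s with h1 | heq | h1
      · rw [if_pos (show r+t < r+s by omega), if_pos h1]
      · subst heq
        rw [if_neg (by omega : ¬ r+t < r+t), if_pos rfl, if_neg (lt_irrefl t), if_pos rfl]
      · rw [if_neg (by omega : ¬ r+t < r+s), if_neg (by omega : ¬ r+t = r+s),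
          if_neg (by omega : ¬ t < s), if_neg (by omega : ¬ t = s)]
    · rw [if_neg (by omega : ¬ r < i), if_neg (by omega : ¬ r = i),
        if_neg (by omega : ¬ r < i), if_neg (by omega : ¬ r = i),
        if_neg (by omega : ¬ r + n < i + s), if_neg (by omega : ¬ r + n = i + s)]
      congr 1
      omega
  · funext r
    beta_reduce
    rcases lt_trichotomy r i with hri | heq | hri
    · rw [if_pos (show r < i + s by omega), if_pos hri, if_pos hri]
    · subst heq
      rw [if_neg (lt_irrefl r), if_pos rfl, if_neg (lt_irrefl r), if_pos rfl]
      congr 1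
      · funext t
        rcases lt_trichotomy t s with h1 | heq | h1
        · rw [if_pos (show r+t < r+s by omega), if_pos h1]
        · subst heq
          rw [if_neg (by omega : ¬ r+t < r+t), if_pos rfl, if_neg (lt_irrefl t), if_pos rfl]
          exact Finset.sum_congr rfl fun u _ => by rw [← Nat.add_assoc]
        · rw [if_neg (by omega : ¬ r+t < r+s), if_neg (by omega : ¬ r+t = r+s),
            if_neg (by omega : ¬ t < s), if_neg (by omega : ¬ t = s)]
          congr 1
          omega
      · funext t
        rcases lt_trichotomy t s with h1 | heq | h1
        · rw [if_pos (show r+t < r+s by omega), if_pos h1]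
        · subst heq
          rw [if_neg (by omega : ¬ r+t < r+t), if_pos rfl, if_neg (lt_irrefl t), if_pos rfl]
          congr 1
          · funext u; congr 1; omega
          · funext u; congr 1; omega
        · rw [if_neg (by omega : ¬ r+t < r+s), if_neg (by omega : ¬ r+t = r+s),
            if_neg (by omega : ¬ t < s), if_neg (by omega : ¬ t = s)]
          congr 1
          omega
    · rw [if_neg (by omega : ¬ r < i), if_neg (by omega : ¬ r = i),
        if_neg (by omega : ¬ r < i), if_neg (by omega : ¬ r = i),
        if_neg (by omega : ¬ r + n < i + s), if_neg (by omega : ¬ r + n = i + s)]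
      congr 1
      omega

lemma bulletAt_disj (n l i d : ℕ) (f g h : CMap k A)
    (hdep : ∀ lam lam' (b b' : ℕ → A), (∀ r, r < n → lam r = lam' r) →
      (∀ r, r < n + 1 → b r = b' r) → g lam b = g lam' b') :
    bulletAt l (i+n+1+d) (bulletAt n i f g) h
      = bulletAt n i (bulletAt l (i+1+d) f h) g := by
  funext lam a
  unfold bulletAt
  congr 1
  · funext r
    beta_reduce
    rcases lt_trichotomy r i with hri | heq | hri
    · rw [if_pos hri, if_pos (show r < i+n+1+d by omega), if_pos (show r < i+1+d by omega),
        if_pos hri]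
    · subst heq
      rw [if_neg (lt_irrefl r), if_pos rfl, if_neg (lt_irrefl r), if_pos rfl,
        if_pos (show r < r+1+d by omega)]
      refine Finset.sum_congr rfl fun t ht => ?_
      rw [if_pos (show r + t < r+n+1+d by simp only [Finset.mem_range] at ht; omega)]
    · rw [if_neg (by omega : ¬ r < i), if_neg (by omega : ¬ r = i)]
      rcases lt_trichotomy r (i+1+d) with hru | heq | hru
      · rw [if_pos (show r + n < i+n+1+d by omega), if_pos hru,
          if_neg (by omega : ¬ r < i), if_neg (by omega : ¬ r = i)]
      · rw [heq, if_neg (by omega : ¬ i+1+d+n < i+n+1+d),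
          if_pos (show i+1+d+n = i+n+1+d by omega),
          if_neg (lt_irrefl (i+1+d)), if_pos rfl]
        refine Finset.sum_congr rfl fun t ht => ?_
        rw [if_neg (by omega : ¬ i+1+d+t < i), if_neg (by omega : ¬ i+1+d+t = i)]
        congr 1
        omega
      · rw [if_neg (by omega : ¬ r + n < i+n+1+d), if_neg (by omega : ¬ r + n = i+n+1+d),
          if_neg (by omega : ¬ r < i+1+d), if_neg (by omega : ¬ r = i+1+d),
          if_neg (by omega : ¬ r + l < i), if_neg (by omega : ¬ r + l = i)]
        congr 1
        omega
  · funext r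
    beta_reduce
    rcases lt_trichotomy r i with hri | heq | hri
    · rw [if_pos hri, if_pos (show r < i+n+1+d by omega), if_pos (show r < i+1+d by omega),
        if_pos hri]
    · subst heq
      rw [if_neg (lt_irrefl r), if_pos rfl, if_neg (lt_irrefl r), if_pos rfl,
        if_pos (show r < r+1+d by omega)]
      refine hdep _ _ _ _ (fun t htn => ?_) (fun t htn => ?_)
      · rw [if_pos (show r + t < r+n+1+d by omega)]
      · rw [if_pos (show r + t < r+n+1+d by omega)]
    · rw [if_neg (by omega : ¬ r < i), if_neg (by omega : ¬ r = i)]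
      rcases lt_trichotomy r (i+1+d) with hru | heq | hru
      · rw [if_pos (show r + n < i+n+1+d by omega), if_pos hru,
          if_neg (by omega : ¬ r < i), if_neg (by omega : ¬ r = i)]
      · rw [heq, if_neg (by omega : ¬ i+1+d+n < i+n+1+d),
          if_pos (show i+1+d+n = i+n+1+d by omega),
          if_neg (lt_irrefl (i+1+d)), if_pos rfl]
        congr 1
        · funext t
          rw [if_neg (by omega : ¬ i+1+d+t < i), if_neg (by omega : ¬ i+1+d+t = i)]
          congr 1
          omega
        · funext t
          rw [if_neg (by omega : ¬ i+1+d+t < i), if_neg (by omega : ¬ i+1+d+t = i)]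
          congr 1
          omega
      · rw [if_neg (by omega : ¬ r + n < i+n+1+d), if_neg (by omega : ¬ r + n = i+n+1+d),
          if_neg (by omega : ¬ r < i+1+d), if_neg (by omega : ¬ r = i+1+d),
          if_neg (by omega : ¬ r + l < i), if_neg (by omega : ¬ r + l = i)]
        congr 1
        omega

lemma hdiff_decomp (S : AssocConfAlg k A) (p : ℕ) (φ : CMap k A) (lam : ℕ → k) (a : ℕ → A) :
    hdiff S.mul (p+1) φ lam a
      = ((-1:ℤ)^p) • bullet 1 p (rhoOf S) φ lam a - bullet p 1 φ (rhoOf S) lam a := by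
  have h0 : bulletAt p 0 (rhoOf S) φ lam a
      = S.mul (φ lam a) (a (p + 1)) (∑ j ∈ Finset.range (p+1), lam j) := by
    have e1 : (fun t => lam (0+t)) = lam := funext fun t => by rw [Nat.zero_add]
    have e2 : (fun t => a (0+t)) = a := funext fun t => by rw [Nat.zero_add]
    unfold bulletAt rhoOf
    beta_reduce
    norm_num
    eta_reduce
    rw [show 1+p = p+1 from by omega]
  have h1 : bulletAt p 1 (rhoOf S) φ lam a
      = S.mul (a 0) (φ (fun r => lam (r+1)) (fun r => a (r+1))) (lam 0) := by
    have e1 : (fun t => lam (1+t)) = (fun r => lam (r+1)) := funext fun t => by rw [Nat.add_comm]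
    have e2 : (fun t => a (1+t)) = (fun r => a (r+1)) := funext fun t => by rw [Nat.add_comm]
    unfold bulletAt rhoOf
    beta_reduce
    norm_num
    rw [e1, e2]
  have hmid : ∀ i, bulletAt 1 i φ (rhoOf S) lam a
      = φ (fun r => if r < i then lam r else if r = i then lam i + lam (i + 1) else lam (r + 1))
          (fun r => if r < i then a r
            else if r = i then S.mul (a i) (a (i + 1)) (lam i)
            else a (r + 1)) := by
    intro i
    unfold bulletAt rhoOf
    beta_reduce
    congr 1
    funext r
    rcases lt_trichotomy r i with hri | heq | hri
    · rw [if_pos hri, if_pos hri]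
    · subst heq
      rw [if_neg (lt_irrefl r), if_pos rfl, if_neg (lt_irrefl r), if_pos rfl,
        Finset.sum_range_succ, Finset.sum_range_one]
      norm_num
    · rw [if_neg (by omega : ¬ r < i), if_neg (by omega : ¬ r = i),
        if_neg (by omega : ¬ r < i), if_neg (by omega : ¬ r = i)]
  have hb1 : bullet 1 p (rhoOf S) φ lam a
      = bulletAt p 0 (rhoOf S) φ lam a + (-1:ℤ)^p • bulletAt p 1 (rhoOf S) φ lam a := by
    simp [bullet, Finset.sum_range_succ]
  have hb2 : bullet p 1 φ (rhoOf S) lam a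
      = ∑ i ∈ Finset.range (p+1), (-1:ℤ)^i •
          φ (fun r => if r < i then lam r else if r = i then lam i + lam (i + 1) else lam (r + 1))
            (fun r => if r < i then a r
              else if r = i then S.mul (a i) (a (i + 1)) (lam i)
              else a (r + 1)) := by
    unfold bullet
    exact Finset.sum_congr rfl fun i _ => by rw [hmid i, one_mul]
  rw [hb1, h0, h1, hb2]
  unfold hdiff
  rw [smul_add, smul_smul, ← pow_add, Even.neg_one_pow ⟨p, rfl⟩, one_smul]
  have hlast : ((-1:ℤ)^(p+1+1)) = (-1:ℤ)^p := by
    rw [pow_succ, pow_succ, mul_neg_one, mul_neg_one, neg_neg]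
  rw [hlast]
  have hmidsum : ∑ i ∈ Finset.range (p+1), ((-1:ℤ)^(i+1)) •
      φ (fun r => if r < i then lam r else if r = i then lam i + lam (i + 1) else lam (r + 1))
        (fun r => if r < i then a r
          else if r = i then S.mul (a i) (a (i + 1)) (lam i)
          else a (r + 1))
      = - ∑ i ∈ Finset.range (p+1), ((-1:ℤ)^i) •
          φ (fun r => if r < i then lam r else if r = i then lam i + lam (i + 1) else lam (r + 1))
            (fun r => if r < i then a r
              else if r = i then S.mul (a i) (a (i + 1)) (lam i)
              else a (r + 1)) := by
    rw [← Finset.sum_neg_distrib]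
    exact Finset.sum_congr rfl fun i _ => by rw [pow_succ, mul_neg_one, neg_smul]
  rw [hmidsum]
  abel

section Key
variable {M : Type*} [AddCommGroup M]

lemma two_sum (F : ℕ → M) : (∑ s ∈ Finset.range 2, F s) = F 0 + F 1 := by
  rw [Finset.sum_range_succ, Finset.sum_range_one]

lemma smul_congr {x y : ℕ} (h : x % 2 = y % 2) (m : M) :
    (-1:ℤ)^x • m = (-1:ℤ)^y • m := by rw [neg_one_pow_congr' h]

lemma split3 (x y N : ℕ) (hxy : x ≤ y) (hyN : y ≤ N) (F : ℕ → M) :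
    ∑ t ∈ Finset.range N, F t
      = (∑ t ∈ Finset.range x, F t) + (∑ t ∈ Finset.Ico x y, F t)
        + ∑ t ∈ Finset.Ico y N, F t := by
  rw [Finset.range_eq_Ico, ← Finset.sum_Ico_consecutive F (Nat.zero_le x) (le_trans hxy hyN),
    ← Finset.sum_Ico_consecutive F hxy hyN, ← Finset.range_eq_Ico, add_assoc]

lemma tri_swap (P : ℕ) (K : ℕ → ℕ → M) :
    ∑ u ∈ Finset.range P, ∑ i ∈ Finset.Ico (u+1) P, K u i
      = ∑ i ∈ Finset.range P, ∑ u ∈ Finset.range i, K u i := by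
  rw [Finset.range_eq_Ico, Finset.sum_Ico_Ico_comm' 0 P K]
  simp only [Finset.range_eq_Ico]

end Key

lemma smul_sum_merge {M : Type*} [AddCommGroup M] (x : ℕ) {ι : Type*} (T : Finset ι)
    (y : ι → ℕ) (v : ι → M) :
    (-1:ℤ)^x • (∑ s ∈ T, (-1:ℤ)^(y s) • v s) = ∑ s ∈ T, (-1:ℤ)^(x + y s) • v s := by
  rw [Finset.smul_sum]
  exact Finset.sum_congr rfl fun s _ => by rw [smul_smul, ← pow_add]

section Key2
variable {M : Type*} [AddCommGroup M]

lemma key (p q : ℕ) (a e c m1 m2 : ℕ → ℕ → M) (Q1 Q2 : M)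
    (h10 : ∀ j, j ≤ p → m1 0 j = c 0 j)
    (h1Q : m1 0 (p+1) = Q1)
    (h11 : ∀ j, j ≤ p → m1 1 (j+1) = c 1 j)
    (h1q : m1 1 0 = Q2)
    (hlt : ∀ u j, j < u → m2 u j = e j (u+q))
    (hmid0 : ∀ u, m2 u u = a u 0)
    (hmid1 : ∀ u, m2 u (u+1) = a u 1)
    (hgt : ∀ u j, u + 2 ≤ j → m2 u j = e (j-1) u) :
    (∑ i ∈ Finset.range (p+1), (-1:ℤ)^((q+1)*i) •
        ((-1:ℤ)^q • (∑ s ∈ Finset.range 2, (-1:ℤ)^(q*s) • a i s)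
          - ∑ s ∈ Finset.range (q+1), (-1:ℤ)^(1*s) • e i (i+s)))
      + (-1:ℤ)^q • (∑ j ∈ Finset.range (p+1+1), (-1:ℤ)^(q*j) •
          ((-1:ℤ)^p • (∑ s ∈ Finset.range 2, (-1:ℤ)^(p*s) • m1 s j)
            - ∑ u ∈ Finset.range (p+1), (-1:ℤ)^(1*u) • m2 u j))
      - ((-1:ℤ)^(p+q) • (∑ s ∈ Finset.range 2, (-1:ℤ)^((p+q)*s) •
            (∑ i ∈ Finset.range (p+1), (-1:ℤ)^(q*i) • c s i))
          - ∑ t ∈ Finset.range (p+q+1), (-1:ℤ)^(1*t) •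
              (∑ i ∈ Finset.range (p+1), (-1:ℤ)^(q*i) • e i t))
      = (-1:ℤ)^(p+q*p) • Q1 + (-1:ℤ)^q • Q2 := by
  have e1 : (∑ i ∈ Finset.range (p+1), (-1:ℤ)^((q+1)*i) •
        ((-1:ℤ)^q • (∑ s ∈ Finset.range 2, (-1:ℤ)^(q*s) • a i s)
          - ∑ s ∈ Finset.range (q+1), (-1:ℤ)^(1*s) • e i (i+s)))
      = ((∑ i ∈ Finset.range (p+1), (-1:ℤ)^((q+1)*i+q) • a i 0)
          + ∑ i ∈ Finset.range (p+1), (-1:ℤ)^((q+1)*i) • a i 1)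
        - ∑ i ∈ Finset.range (p+1), ∑ t ∈ Finset.Ico i (i+q+1), (-1:ℤ)^(q*i+t) • e i t := by
    have hterm : ∀ i, (-1:ℤ)^((q+1)*i) •
          ((-1:ℤ)^q • (∑ s ∈ Finset.range 2, (-1:ℤ)^(q*s) • a i s)
            - ∑ s ∈ Finset.range (q+1), (-1:ℤ)^(1*s) • e i (i+s))
        = (-1:ℤ)^((q+1)*i+q) • a i 0 + (-1:ℤ)^((q+1)*i) • a i 1
          - ∑ t ∈ Finset.Ico i (i+q+1), (-1:ℤ)^(q*i+t) • e i t := fun i => by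
      rw [two_sum, Nat.mul_zero, Nat.mul_one, pow_zero, one_smul,
        smul_add, smul_smul, ← pow_add, Even.neg_one_pow ⟨q, rfl⟩, one_smul,
        smul_sub, smul_add, smul_smul, ← pow_add, smul_sum_merge]
      congr 1
      rw [Finset.sum_Ico_eq_sum_range, show i+q+1-i = q+1 from by omega]
      refine Finset.sum_congr rfl fun s _ => ?_
      refine smul_congr ?_ _
      have h : (q+1)*i = q*i+i := by ring
      rw [h]; generalize q*i = w; omega
    rw [Finset.sum_congr rfl fun i _ => hterm i, Finset.sum_sub_distrib,
      Finset.sum_add_distrib]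
  have e2 : ((-1:ℤ)^q • (∑ j ∈ Finset.range (p+1+1), (-1:ℤ)^(q*j) •
          ((-1:ℤ)^p • (∑ s ∈ Finset.range 2, (-1:ℤ)^(p*s) • m1 s j)
            - ∑ u ∈ Finset.range (p+1), (-1:ℤ)^(1*u) • m2 u j)))
      = ((∑ i ∈ Finset.range (p+1), (-1:ℤ)^(q*i+p+q) • c 0 i)
            + (-1:ℤ)^(p+q*p) • Q1
          + ((∑ i ∈ Finset.range (p+1), (-1:ℤ)^(q*i) • c 1 i) + (-1:ℤ)^q • Q2))
        - (((∑ i ∈ Finset.range (p+1), (-1:ℤ)^((q+1)*i+q) • a i 0)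
              + ∑ i ∈ Finset.range (p+1), (-1:ℤ)^((q+1)*i) • a i 1)
            + ((∑ i ∈ Finset.range (p+1), ∑ t ∈ Finset.range i, (-1:ℤ)^(q*i+t) • e i t)
              + ∑ i ∈ Finset.range (p+1), ∑ t ∈ Finset.Ico (i+q+1) (p+q+1),
                  (-1:ℤ)^(q*i+t) • e i t)) := by
    have hj : ∀ j, (-1:ℤ)^q • ((-1:ℤ)^(q*j) •
          ((-1:ℤ)^p • (∑ s ∈ Finset.range 2, (-1:ℤ)^(p*s) • m1 s j)
            - ∑ u ∈ Finset.range (p+1), (-1:ℤ)^(1*u) • m2 u j))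
        = (-1:ℤ)^(q+q*j+p) • m1 0 j + (-1:ℤ)^(q+q*j) • m1 1 j
          - ∑ u ∈ Finset.range (p+1), (-1:ℤ)^(q+q*j+1*u) • m2 u j := fun j => by
      rw [smul_smul, ← pow_add, two_sum, Nat.mul_zero, Nat.mul_one, pow_zero, one_smul,
        smul_add, smul_smul, ← pow_add, Even.neg_one_pow ⟨p, rfl⟩, one_smul,
        smul_sub, smul_add, smul_smul, ← pow_add, smul_sum_merge]
    have hB1 : (∑ j ∈ Finset.range (p+1+1), (-1:ℤ)^(q+q*j+p) • m1 0 j)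
        = (∑ i ∈ Finset.range (p+1), (-1:ℤ)^(q*i+p+q) • c 0 i) + (-1:ℤ)^(p+q*p) • Q1 := by
      rw [Finset.sum_range_succ]
      congr 1
      · refine Finset.sum_congr rfl fun j hj' => ?_
        rw [h10 j (by simpa using Nat.lt_succ_iff.mp (Finset.mem_range.mp hj'))]
        exact smul_congr (by generalize q*j = w; omega) _
      · rw [h1Q]
        refine smul_congr ?_ _
        have h : q*(p+1) = q*p + q := by ring
        rw [h]; generalize q*p = w; omega
    have hB2 : (∑ j ∈ Finset.range (p+1+1), (-1:ℤ)^(q+q*j) • m1 1 j)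
        = (∑ i ∈ Finset.range (p+1), (-1:ℤ)^(q*i) • c 1 i) + (-1:ℤ)^q • Q2 := by
      rw [Finset.sum_range_succ']
      congr 1
      · refine Finset.sum_congr rfl fun j hj' => ?_
        rw [h11 j (by simpa using Nat.lt_succ_iff.mp (Finset.mem_range.mp hj'))]
        refine smul_congr ?_ _
        have h : q*(j+1) = q*j + q := by ring
        rw [h]; generalize q*j = w; omega
      · rw [h1q]
        exact smul_congr (by simp) _
    have hu : ∀ u ∈ Finset.range (p+1),
        (∑ j ∈ Finset.range (p+1+1), (-1:ℤ)^(q+q*j+1*u) • m2 u j)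
          = ((∑ j ∈ Finset.range u, (-1:ℤ)^(q*j+(u+q)) • e j (u+q))
              + ((-1:ℤ)^((q+1)*u+q) • a u 0 + (-1:ℤ)^((q+1)*u) • a u 1)
              + ∑ i ∈ Finset.Ico (u+1) (p+1), (-1:ℤ)^(q*i+u) • e i u) := by
      intro u hu'
      rw [split3 u (u+2) (p+1+1) (by omega)
        (by simp only [Finset.mem_range] at hu'; omega)]
      congr 1
      · congr 1
        · refine Finset.sum_congr rfl fun j hj' => ?_
          rw [hlt u j (Finset.mem_range.mp hj')]
          exact smul_congr (by generalize q*j = w; omega) _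
        · rw [Finset.sum_Ico_eq_sum_range, show u+2-u = 2 from by omega, two_sum,
            Nat.add_zero, hmid0 u, hmid1 u]
          congr 1
          · refine smul_congr ?_ _
            have h : (q+1)*u = q*u+u := by ring
            rw [h]; generalize q*u = w; omega
          · refine smul_congr ?_ _
            have h1 : q*(u+1) = q*u+q := by ring
            have h2 : (q+1)*u = q*u+u := by ring
            rw [h1, h2]; generalize q*u = w; omega
      · refine Finset.sum_nbij' (fun j => j - 1) (fun i => i + 1) ?_ ?_ ?_ ?_ ?_
        · intro j hj'
          simp only [Finset.mem_Ico] at hj' ⊢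
          omega
        · intro i hi'
          simp only [Finset.mem_Ico] at hi' ⊢
          omega
        · intro j hj'
          simp only [Finset.mem_Ico] at hj'
          omega
        · intro i hi'
          omega
        · intro j hj'
          simp only [Finset.mem_Ico] at hj'
          rw [hgt u j (by omega)]
          obtain ⟨w, rfl⟩ : ∃ w, j = w + 1 := ⟨j - 1, by omega⟩
          rw [Nat.add_sub_cancel]
          refine smul_congr ?_ _
          have h : q*(w+1) = q*w+q := by ring
          rw [h]; generalize q*w = w'; omega
    have hlow : (∑ u ∈ Finset.range (p+1), ∑ j ∈ Finset.range u,
          (-1:ℤ)^(q*j+(u+q)) • e j (u+q))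
        = ∑ i ∈ Finset.range (p+1), ∑ t ∈ Finset.Ico (i+q+1) (p+q+1),
            (-1:ℤ)^(q*i+t) • e i t := by
      rw [← tri_swap (p+1) (fun x y => (-1:ℤ)^(q*x+(y+q)) • e x (y+q))]
      refine Finset.sum_congr rfl fun u _ => ?_
      refine Finset.sum_nbij' (fun i => i + q) (fun t => t - q) ?_ ?_ ?_ ?_ ?_
      · intro i hi'
        simp only [Finset.mem_Ico] at hi' ⊢
        omega
      · intro t ht'
        simp only [Finset.mem_Ico] at ht' ⊢
        omega
      · intro i _
        omega
      · intro t ht'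
        simp only [Finset.mem_Ico] at ht'
        omega
      · intro i _
        rfl
    have hhigh : (∑ u ∈ Finset.range (p+1), ∑ i ∈ Finset.Ico (u+1) (p+1),
          (-1:ℤ)^(q*i+u) • e i u)
        = ∑ i ∈ Finset.range (p+1), ∑ t ∈ Finset.range i, (-1:ℤ)^(q*i+t) • e i t := by
      rw [tri_swap (p+1) (fun u i => (-1:ℤ)^(q*i+u) • e i u)]
    calc (-1:ℤ)^q • (∑ j ∈ Finset.range (p+1+1), (-1:ℤ)^(q*j) •
          ((-1:ℤ)^p • (∑ s ∈ Finset.range 2, (-1:ℤ)^(p*s) • m1 s j)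
            - ∑ u ∈ Finset.range (p+1), (-1:ℤ)^(1*u) • m2 u j))
        = ∑ j ∈ Finset.range (p+1+1), ((-1:ℤ)^(q+q*j+p) • m1 0 j
            + (-1:ℤ)^(q+q*j) • m1 1 j
            - ∑ u ∈ Finset.range (p+1), (-1:ℤ)^(q+q*j+1*u) • m2 u j) := by
          rw [Finset.smul_sum]
          exact Finset.sum_congr rfl fun j _ => hj j
      _ = ((∑ j ∈ Finset.range (p+1+1), (-1:ℤ)^(q+q*j+p) • m1 0 j)
            + ∑ j ∈ Finset.range (p+1+1), (-1:ℤ)^(q+q*j) • m1 1 j)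
          - ∑ j ∈ Finset.range (p+1+1), ∑ u ∈ Finset.range (p+1),
              (-1:ℤ)^(q+q*j+1*u) • m2 u j := by
          rw [Finset.sum_sub_distrib, Finset.sum_add_distrib]
      _ = ((∑ j ∈ Finset.range (p+1+1), (-1:ℤ)^(q+q*j+p) • m1 0 j)
            + ∑ j ∈ Finset.range (p+1+1), (-1:ℤ)^(q+q*j) • m1 1 j)
          - ∑ u ∈ Finset.range (p+1), ((∑ j ∈ Finset.range u,
                (-1:ℤ)^(q*j+(u+q)) • e j (u+q))
              + ((-1:ℤ)^((q+1)*u+q) • a u 0 + (-1:ℤ)^((q+1)*u) • a u 1)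
              + ∑ i ∈ Finset.Ico (u+1) (p+1), (-1:ℤ)^(q*i+u) • e i u) := by
          rw [Finset.sum_comm, Finset.sum_congr rfl hu]
      _ = ((∑ j ∈ Finset.range (p+1+1), (-1:ℤ)^(q+q*j+p) • m1 0 j)
            + ∑ j ∈ Finset.range (p+1+1), (-1:ℤ)^(q+q*j) • m1 1 j)
          - ((∑ u ∈ Finset.range (p+1), ∑ j ∈ Finset.range u,
                (-1:ℤ)^(q*j+(u+q)) • e j (u+q))
              + ((∑ u ∈ Finset.range (p+1), (-1:ℤ)^((q+1)*u+q) • a u 0)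
                + ∑ u ∈ Finset.range (p+1), (-1:ℤ)^((q+1)*u) • a u 1)
              + ∑ u ∈ Finset.range (p+1), ∑ i ∈ Finset.Ico (u+1) (p+1),
                  (-1:ℤ)^(q*i+u) • e i u) := by
          rw [Finset.sum_add_distrib, Finset.sum_add_distrib, Finset.sum_add_distrib]
      _ = _ := by
          rw [hB1, hB2, hlow, hhigh]
          abel
  have e3 : ((-1:ℤ)^(p+q) • (∑ s ∈ Finset.range 2, (-1:ℤ)^((p+q)*s) •
            (∑ i ∈ Finset.range (p+1), (-1:ℤ)^(q*i) • c s i))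
          - ∑ t ∈ Finset.range (p+q+1), (-1:ℤ)^(1*t) •
              (∑ i ∈ Finset.range (p+1), (-1:ℤ)^(q*i) • e i t))
      = ((∑ i ∈ Finset.range (p+1), (-1:ℤ)^(q*i+p+q) • c 0 i)
          + ∑ i ∈ Finset.range (p+1), (-1:ℤ)^(q*i) • c 1 i)
        - (((∑ i ∈ Finset.range (p+1), ∑ t ∈ Finset.range i, (-1:ℤ)^(q*i+t) • e i t)
            + ∑ i ∈ Finset.range (p+1), ∑ t ∈ Finset.Ico i (i+q+1), (-1:ℤ)^(q*i+t) • e i t)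
          + ∑ i ∈ Finset.range (p+1), ∑ t ∈ Finset.Ico (i+q+1) (p+q+1),
              (-1:ℤ)^(q*i+t) • e i t) := by
    have hc : ((-1:ℤ)^(p+q) • (∑ s ∈ Finset.range 2, (-1:ℤ)^((p+q)*s) •
            (∑ i ∈ Finset.range (p+1), (-1:ℤ)^(q*i) • c s i)))
        = (∑ i ∈ Finset.range (p+1), (-1:ℤ)^(q*i+p+q) • c 0 i)
          + ∑ i ∈ Finset.range (p+1), (-1:ℤ)^(q*i) • c 1 i := by
      rw [two_sum, Nat.mul_zero, Nat.mul_one, pow_zero, one_smul, smul_add, smul_smul,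
        ← pow_add, show ((-1:ℤ)^(p+q+(p+q))) = 1 from Even.neg_one_pow ⟨p+q, rfl⟩, one_smul,
        Finset.smul_sum]
      congr 1
      exact Finset.sum_congr rfl fun i _ => by
        rw [smul_smul, ← pow_add]
        exact smul_congr (by generalize q*i = w; omega) _
    have he : (∑ t ∈ Finset.range (p+q+1), (-1:ℤ)^(1*t) •
              (∑ i ∈ Finset.range (p+1), (-1:ℤ)^(q*i) • e i t))
        = ((∑ i ∈ Finset.range (p+1), ∑ t ∈ Finset.range i, (-1:ℤ)^(q*i+t) • e i t)
            + ∑ i ∈ Finset.range (p+1), ∑ t ∈ Finset.Ico i (i+q+1), (-1:ℤ)^(q*i+t) • e i t)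
          + ∑ i ∈ Finset.range (p+1), ∑ t ∈ Finset.Ico (i+q+1) (p+q+1),
              (-1:ℤ)^(q*i+t) • e i t := by
      have h1 : (∑ t ∈ Finset.range (p+q+1), (-1:ℤ)^(1*t) •
              (∑ i ∈ Finset.range (p+1), (-1:ℤ)^(q*i) • e i t))
          = ∑ i ∈ Finset.range (p+1), ∑ t ∈ Finset.range (p+q+1), (-1:ℤ)^(q*i+t) • e i t := by
        have hA : ∀ t, (-1:ℤ)^(1*t) • (∑ i ∈ Finset.range (p+1), (-1:ℤ)^(q*i) • e i t)
            = ∑ i ∈ Finset.range (p+1), (-1:ℤ)^(q*i+t) • e i t := fun t => by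
          rw [Finset.smul_sum]
          exact Finset.sum_congr rfl fun i _ => by
            rw [smul_smul, ← pow_add]
            exact smul_congr (by generalize q*i = w; omega) _
        rw [Finset.sum_congr rfl fun t _ => hA t]
        exact Finset.sum_comm
      rw [h1, ← Finset.sum_add_distrib, ← Finset.sum_add_distrib]
      refine Finset.sum_congr rfl fun i hi => ?_
      exact split3 i (i+q+1) (p+q+1) (by omega) (by simp only [Finset.mem_range] at hi; omega) _
    rw [hc, he]
  rw [e1, e2, e3]
  abel

end Key2

lemma addIn_rho (S : AssocConfAlg k A) : ∀ s, s < 2 → AddIn s (rhoOf S) := by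
  intro s hs lam a x y
  interval_cases s
  · simp [rhoOf, Function.update_apply, S.add_left]
  · simp [rhoOf, Function.update_apply, S.add_right]

lemma rho_dep (S : AssocConfAlg k A) :
    ∀ lam lam' (b b' : ℕ → A), (∀ r, r < 1 → lam r = lam' r) →
      (∀ r, r < 1 + 1 → b r = b' r) → rhoOf S lam b = rhoOf S lam' b' := by
  intro lam lam' b b' h1 h2
  unfold rhoOf
  rw [h1 0 (by omega), h2 0 (by omega), h2 1 (by omega)]

lemma E1 (S : AssocConfAlg k A) (p q : ℕ) (f g : CMap k A) (hf : IsU S.D p f)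
    (lam : ℕ → k) (a : ℕ → A) :
    bullet p (q+1) f (hdiff S.mul (q+1) g) lam a
      = ∑ i ∈ Finset.range (p+1), (-1:ℤ)^((q+1)*i) •
          ((-1:ℤ)^q • (∑ s ∈ Finset.range 2, (-1:ℤ)^(q*s) •
              bulletAt (q+1) i f (bulletAt q s (rhoOf S) g) lam a)
            - ∑ s ∈ Finset.range (q+1), (-1:ℤ)^(1*s) •
                bulletAt 1 (i+s) (bulletAt q i f g) (rhoOf S) lam a) := by
  unfold bullet
  refine Finset.sum_congr rfl fun i hi => ?_
  congr 1
  have hA : AddIn i f := fun lam' a' x y =>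
    hf.map_add lam' a' i (by simp only [Finset.mem_range] at hi; omega) x y
  rw [bulletAt_apply, hdiff_decomp S q g,
    show (bullet 1 q (rhoOf S) g (fun t => lam (i+t)) (fun t => a (i+t)))
      = ∑ s ∈ Finset.range 2, (-1:ℤ)^(q*s) •
          (bulletAt q s (rhoOf S) g (fun t => lam (i+t)) (fun t => a (i+t))) from rfl,
    show (bullet q 1 g (rhoOf S) (fun t => lam (i+t)) (fun t => a (i+t)))
      = ∑ s ∈ Finset.range (q+1), (-1:ℤ)^(1*s) •
          (bulletAt 1 s g (rhoOf S) (fun t => lam (i+t)) (fun t => a (i+t))) from rfl,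
    hA.expand]
  congr 1
  · congr 1
    exact Finset.sum_congr rfl fun s _ => by
      rw [← bulletAt_apply (q+1) i f (bulletAt q s (rhoOf S) g) lam a]
  · refine Finset.sum_congr rfl fun s hs => ?_
    rw [← bulletAt_apply (q+1) i f (bulletAt 1 s g (rhoOf S)) lam a,
      ← congrFun (congrFun (bulletAt_nest q 1 i s
        (Nat.lt_succ_iff.mp (Finset.mem_range.mp hs)) f g (rhoOf S)) lam) a]

lemma E2 (S : AssocConfAlg k A) (p q : ℕ) (f g : CMap k A) (lam : ℕ → k) (a : ℕ → A) :
    bullet (p+1) q (hdiff S.mul (p+1) f) g lam a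
      = ∑ j ∈ Finset.range (p+1+1), (-1:ℤ)^(q*j) •
          ((-1:ℤ)^p • (∑ s ∈ Finset.range 2, (-1:ℤ)^(p*s) •
              bulletAt q j (bulletAt p s (rhoOf S) f) g lam a)
            - ∑ u ∈ Finset.range (p+1), (-1:ℤ)^(1*u) •
                bulletAt q j (bulletAt 1 u f (rhoOf S)) g lam a) := by
  unfold bullet
  refine Finset.sum_congr rfl fun j _ => ?_
  congr 1
  unfold bulletAt
  rw [hdiff_decomp]
  rfl

lemma E3a (S : AssocConfAlg k A) (p q : ℕ) (f g : CMap k A) (s : ℕ) (hs : s < 2)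
    (lam : ℕ → k) (a : ℕ → A) :
    bulletAt (p+q) s (rhoOf S) (bullet p q f g) lam a
      = ∑ i ∈ Finset.range (p+1), (-1:ℤ)^(q*i) •
          bulletAt (p+q) s (rhoOf S) (bulletAt q i f g) lam a := by
  rw [bulletAt_apply,
    show (bullet p q f g (fun t => lam (s+t)) (fun t => a (s+t)))
      = ∑ i ∈ Finset.range (p+1), (-1:ℤ)^(q*i) •
          (bulletAt q i f g (fun t => lam (s+t)) (fun t => a (s+t))) from rfl,
    (addIn_rho S s hs).sum]
  exact Finset.sum_congr rfl fun i _ => by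
    rw [← bulletAt_apply (p+q) s (rhoOf S) (bulletAt q i f g) lam a]

lemma E3 (S : AssocConfAlg k A) (p q : ℕ) (f g : CMap k A) (lam : ℕ → k) (a : ℕ → A) :
    hdiff S.mul (p+q+1) (bullet p q f g) lam a
      = (-1:ℤ)^(p+q) • (∑ s ∈ Finset.range 2, (-1:ℤ)^((p+q)*s) •
            (∑ i ∈ Finset.range (p+1), (-1:ℤ)^(q*i) •
              bulletAt (p+q) s (rhoOf S) (bulletAt q i f g) lam a))
        - ∑ t ∈ Finset.range (p+q+1), (-1:ℤ)^(1*t) •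
            (∑ i ∈ Finset.range (p+1), (-1:ℤ)^(q*i) •
              bulletAt 1 t (bulletAt q i f g) (rhoOf S) lam a) := by
  rw [hdiff_decomp S (p+q) (bullet p q f g) lam a]
  congr 1
  · congr 1
    rw [show bullet 1 (p+q) (rhoOf S) (bullet p q f g) lam a
        = ∑ s ∈ Finset.range 2, (-1:ℤ)^((p+q)*s) •
            bulletAt (p+q) s (rhoOf S) (bullet p q f g) lam a from rfl]
    refine Finset.sum_congr rfl fun s hs => ?_
    rw [E3a S p q f g s (Finset.mem_range.mp hs) lam a]

lemma cup_eq_bullet (S : AssocConfAlg k A) (p q : ℕ) (f g : CMap k A) (hf : IsU S.D p f)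
    (lam : ℕ → k) (a : ℕ → A) :
    cup S.mul (p+1) f g lam a
      = bulletAt q (p+1) (bulletAt p 0 (rhoOf S) f) g lam a := by
  unfold cup bulletAt rhoOf
  beta_reduce
  norm_num
  congr 1
  · exact (hf.depends _ _ _ _
      (fun r hr => by rw [if_pos (show r ≤ p by omega)])
      (fun r hr => by rw [if_pos (show r ≤ p by omega)])).symm
  · rw [if_pos (by omega : 1 + p = p + 1)]
    congr 1
    · funext t; congr 1; omega
    · funext t; congr 1; omega
  · refine Finset.sum_congr rfl fun t ht => ?_
    rw [if_pos (show t ≤ p from Nat.lt_succ_iff.mp (Finset.mem_range.mp ht))]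

/-- homotopy formula.  Let `A` be an associative conformal algebra.
For any `f ∈ C^m(A, A)` and `g ∈ C^n(A, A)` with `m, n ≥ 1`,
`f • d_n(g) + (-1)^{n-1} d_m(f) • g - d_{m+n-1}(f • g)
  = (-1)^{n-1} (g ⊔ f - (-1)^{mn} f ⊔ g)` on cochains. -/
theorem hochschild_cup_homotopy_formula {k A : Type*} [Field k] [CharZero k]
    [AddCommGroup A] [Module k A] (S : AssocConfAlg k A) (m n : ℕ)
    (hm : 1 ≤ m) (hn : 1 ≤ n) (f g : CMap k A)
    (hf : IsU S.D (m - 1) f) (hg : IsU S.D (n - 1) g) :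
    bullet (m - 1) n f (hdiff S.mul n g)
      + ((-1 : ℤ) ^ (n - 1)) • bullet m (n - 1) (hdiff S.mul m f) g
      - hdiff S.mul (m + n - 1) (bullet (m - 1) (n - 1) f g)
    = ((-1 : ℤ) ^ (n - 1)) •
        (cup S.mul n g f - ((-1 : ℤ) ^ (m * n)) • cup S.mul m f g) := by
  obtain ⟨p, rfl⟩ : ∃ p, m = p + 1 := ⟨m - 1, by omega⟩
  obtain ⟨q, rfl⟩ : ∃ q, n = q + 1 := ⟨n - 1, by omega⟩
  simp only [Nat.add_sub_cancel] at hf hg ⊢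
  rw [show p + 1 + (q + 1) - 1 = p + q + 1 from by omega]
  funext lam a
  simp only [Pi.add_apply, Pi.sub_apply, Pi.smul_apply]
  rw [E1 S p q f g hf lam a, E2 S p q f g lam a, E3 S p q f g lam a]
  rw [show ((-1:ℤ)^q • (cup S.mul (q+1) g f lam a
        - (-1:ℤ)^((p+1)*(q+1)) • cup S.mul (p+1) f g lam a))
      = (-1:ℤ)^(p+q*p) • cup S.mul (p+1) f g lam a
        + (-1:ℤ)^q • cup S.mul (q+1) g f lam a from by
    rw [smul_sub, smul_smul, ← pow_add]
    have h1 : (-1:ℤ)^(q+(p+1)*(q+1)) = -(-1:ℤ)^(p+q*p) := by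
      have h2 : q+(p+1)*(q+1) = (p+q*p) + (2*q+1) := by ring
      rw [h2, pow_add]
      have h3 : (-1:ℤ)^(2*q+1) = -1 := Odd.neg_one_pow ⟨q, by ring⟩
      rw [h3, mul_neg_one]
    rw [h1, neg_smul, sub_neg_eq_add, add_comm]]
  have h10 : ∀ j, j ≤ p →
      bulletAt q j (bulletAt p 0 (rhoOf S) f) g lam a
        = bulletAt (p+q) 0 (rhoOf S) (bulletAt q j f g) lam a := by
    intro j hj
    have h := bulletAt_nest p q 0 j hj (rhoOf S) f g
    rw [Nat.zero_add] at h
    exact congrFun (congrFun h lam) a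
  have h1Q : bulletAt q (p+1) (bulletAt p 0 (rhoOf S) f) g lam a
      = cup S.mul (p+1) f g lam a :=
    (cup_eq_bullet S p q f g hf lam a).symm
  have h11 : ∀ j, j ≤ p →
      bulletAt q (j+1) (bulletAt p 1 (rhoOf S) f) g lam a
        = bulletAt (p+q) 1 (rhoOf S) (bulletAt q j f g) lam a := by
    intro j hj
    have h := bulletAt_nest p q 1 j hj (rhoOf S) f g
    rw [Nat.add_comm 1 j] at h
    exact congrFun (congrFun h lam) a
  have h1q : bulletAt q 0 (bulletAt p 1 (rhoOf S) f) g lam a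
      = cup S.mul (q+1) g f lam a := by
    have h := bulletAt_disj q p 0 0 (rhoOf S) g f
      (fun l l' b b' hb hb' => hg.depends l l' b b' hb hb')
    simp only [Nat.zero_add, Nat.add_zero] at h
    rw [← congrFun (congrFun h lam) a]
    exact (cup_eq_bullet S q p g f hg lam a).symm
  have hlt : ∀ u j, j < u →
      bulletAt q j (bulletAt 1 u f (rhoOf S)) g lam a
        = bulletAt 1 (u+q) (bulletAt q j f g) (rhoOf S) lam a := by
    intro u j hju
    have h := bulletAt_disj q 1 j (u-j-1) f g (rhoOf S)
      (fun l l' b b' hb hb' => hg.depends l l' b b' hb hb')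
    rw [show j+q+1+(u-j-1) = u+q from by omega,
      show j+1+(u-j-1) = u from by omega] at h
    exact (congrFun (congrFun h lam) a).symm
  have hmid0 : ∀ u, bulletAt q u (bulletAt 1 u f (rhoOf S)) g lam a
      = bulletAt (q+1) u f (bulletAt q 0 (rhoOf S) g) lam a := by
    intro u
    have h := bulletAt_nest 1 q u 0 (by omega) f (rhoOf S) g
    rw [Nat.add_zero, show 1+q = q+1 from by omega] at h
    exact congrFun (congrFun h lam) a
  have hmid1 : ∀ u, bulletAt q (u+1) (bulletAt 1 u f (rhoOf S)) g lam a
      = bulletAt (q+1) u f (bulletAt q 1 (rhoOf S) g) lam a := by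
    intro u
    have h := bulletAt_nest 1 q u 1 (by omega) f (rhoOf S) g
    rw [show 1+q = q+1 from by omega] at h
    exact congrFun (congrFun h lam) a
  have hgt : ∀ u j, u + 2 ≤ j →
      bulletAt q j (bulletAt 1 u f (rhoOf S)) g lam a
        = bulletAt 1 u (bulletAt q (j-1) f g) (rhoOf S) lam a := by
    intro u j huj
    have h := bulletAt_disj 1 q u (j-u-2) f (rhoOf S) g (rho_dep S)
    rw [show u+1+1+(j-u-2) = j from by omega,
      show u+1+(j-u-2) = j-1 from by omega] at h
    exact congrFun (congrFun h lam) a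
  exact key p q
    (fun i s => bulletAt (q+1) i f (bulletAt q s (rhoOf S) g) lam a)
    (fun i t => bulletAt 1 t (bulletAt q i f g) (rhoOf S) lam a)
    (fun s i => bulletAt (p+q) s (rhoOf S) (bulletAt q i f g) lam a)
    (fun s j => bulletAt q j (bulletAt p s (rhoOf S) f) g lam a)
    (fun u j => bulletAt q j (bulletAt 1 u f (rhoOf S)) g lam a)
    (cup S.mul (p+1) f g lam a) (cup S.mul (q+1) g f lam a)
    h10 h1Q h11 h1q hlt hmid0 hmid1 hgt
end

section
/- Let A be an associative conformal algebra and let h ∈ Z¹(A,A) = Der(A,A) be a conformal derivation. Then for any cocycles f ∈ Z^m(A,A), g ∈ Z^n(A,A) with m, n ≥ 1, one has h • (f ⊔ g) = (h • f) ⊔ g + f ⊔ (h • g) as cochains. -/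
open Finset

variable {k : Type*} [Field k]
variable {A : Type*} [AddCommGroup A] [Module k A]

/-- Let `A` be an associative conformal algebra and let
`h ∈ Z¹(A, A) = Der(A, A)` be a conformal derivation.  Then for any cocycles
`f ∈ Z^m(A, A)`, `g ∈ Z^n(A, A)` with `m, n ≥ 1`, one has
`h • (f ⊔ g) = (h • f) ⊔ g + f ⊔ (h • g)` as cochains. -/
theorem derivation_bullet_cup_leibniz {k A : Type*} [Field k] [CharZero k]
    [AddCommGroup A] [Module k A] (S : AssocConfAlg k A) (m n : ℕ)
    (hm : 1 ≤ m) (hn : 1 ≤ n) (h f g : CMap k A)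
    (hh : IsU S.D 0 h) (hhder : hdiff S.mul 1 h = 0)
    (hf : IsU S.D (m - 1) f) (hfc : hdiff S.mul m f = 0)
    (hg : IsU S.D (n - 1) g) (hgc : hdiff S.mul n g = 0) :
    bullet 0 (m + n - 1) h (cup S.mul m f g)
      = cup S.mul m (bullet 0 (m - 1) h f) g + cup S.mul m f (bullet 0 (n - 1) h g) := by
  -- `h` depends only on the argument `a 0`.
  set H : A → A := fun x => h (fun _ => 0) (fun _ => x) with hH
  have Hd : ∀ (lam : ℕ → k) (a : ℕ → A), h lam a = H (a 0) := by
    intro lam a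
    exact hh.depends lam (fun _ => 0) a (fun _ => a 0)
      (fun r hr => absurd hr (Nat.not_lt_zero r))
      (fun r hr => by interval_cases r; rfl)
  -- Any `bullet 0 N h φ` is just `H` applied to the value of `φ`.
  have Hbul : ∀ (N : ℕ) (φ : CMap k A) (lam : ℕ → k) (a : ℕ → A),
      bullet 0 N h φ lam a = H (φ lam a) := by
    intro N φ lam a
    simp only [bullet, zero_add, Finset.sum_range_one, pow_zero, mul_zero, one_smul, bulletAt]
    rw [Hd]
    norm_num
  -- The derivation property of `h`, extracted from `hdiff S.mul 1 h = 0`.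
  have hder : ∀ (x y : A) (μ : k),
      H (S.mul x y μ) = S.mul x (H y) μ + S.mul (H x) y μ := by
    intro x y μ
    have eq := congrFun (congrFun hhder (fun _ => μ)) (fun r => if r = 0 then x else y)
    simp only [hdiff, Finset.sum_range_one, Pi.zero_apply, pow_one, neg_smul, one_smul,
      zero_add, pow_succ, mul_neg, mul_one, neg_neg] at eq
    rw [Hd, Hd, Hd] at eq
    norm_num at eq
    have goal : H (S.mul x y μ) - (S.mul x (H y) μ + S.mul (H x) y μ)
        = -(S.mul x (H y) μ + -H (S.mul x y μ) + S.mul (H x) y μ) := by abel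
    rw [← sub_eq_zero, goal, eq, neg_zero]
  funext lam a
  simp only [Pi.add_apply, Hbul, cup]
  rw [hder, add_comm]
end

section
/- Let A be an associative conformal algebra, M a conformal A-bimodule, and suppose the split extension B = A ⊕̂ M, with λ-product (a,u)_λ(b,v) = (a_λ b, a ⊳_λ v + u ⊲_λ b + u_λ v) for a conformal product ·_λ· on M, is an associative conformal algebra. Let p : B → A, (a,u) ↦ a, and q : A → B, a ↦ (a,0). Then for each n ≥ 1 the assignment [φ] ↦ [p ∘ φ ∘ q^{⊗n}] gives a well-defined linear map Φ^n : HH^n(B) → HH^n(A) (i.e. it sends cocycles to cocycles and coboundaries to coboundaries), and Φ⁰([(a,u)]) = [a] is well defined on HH⁰. -/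
open Finset

variable {k : Type*} [Field k]
variable {A : Type*} [AddCommGroup A] [Module k A]

/-- A conformal bimodule `M` over an associative conformal algebra `A`, in the
polynomial-function representation of the λ-actions. -/
structure ConfBimod {k : Type*} {A : Type*} [Field k] [AddCommGroup A] [Module k A]
    (S : AssocConfAlg k A) (M : Type*) [AddCommGroup M] [Module k M] where
  /-- the action of `∂` on `M` -/
  DM : M →ₗ[k] M
  /-- the left action `(a, v, λ) ↦ a ⊳_λ v` -/
  lact : A → M → k → M
  /-- the right action `(v, a, λ) ↦ v ⊲_λ a` -/
  ract : M → A → k → M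
  lact_add_left : ∀ a b v lam, lact (a + b) v lam = lact a v lam + lact b v lam
  lact_smul_left : ∀ (r : k) a v lam, lact (r • a) v lam = r • lact a v lam
  lact_add_right : ∀ a v w lam, lact a (v + w) lam = lact a v lam + lact a w lam
  lact_smul_right : ∀ (r : k) a v lam, lact a (r • v) lam = r • lact a v lam
  ract_add_left : ∀ v w a lam, ract (v + w) a lam = ract v a lam + ract w a lam
  ract_smul_left : ∀ (r : k) v a lam, ract (r • v) a lam = r • ract v a lam
  ract_add_right : ∀ v a b lam, ract v (a + b) lam = ract v a lam + ract v b lam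
  ract_smul_right : ∀ (r : k) v a lam, ract v (r • a) lam = r • ract v a lam
  lact_poly : ∀ a v, IsPolyFun fun lam => lact a v lam
  ract_poly : ∀ v a, IsPolyFun fun lam => ract v a lam
  lact_D : ∀ a v lam, lact (S.D a) v lam = -(lam • lact a v lam)
  lact_DM : ∀ a v lam, lact a (DM v) lam = DM (lact a v lam) + lam • lact a v lam
  lact_assoc : ∀ a b v lam mu, lact (S.mul a b lam) v (lam + mu) = lact a (lact b v mu) lam
  ract_DM : ∀ v a lam, ract (DM v) a lam = -(lam • ract v a lam)
  ract_D : ∀ v a lam, ract v (S.D a) lam = DM (ract v a lam) + lam • ract v a lam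
  ract_assoc : ∀ v a b lam mu, ract (ract v a lam) b (lam + mu) = ract v (S.mul a b mu) lam
  compat : ∀ a v b lam mu, ract (lact a v lam) b (lam + mu) = lact a (ract v b mu) lam


section Aux

lemma polyCoeffs_spec {F : k → A} (h : IsPolyFun F) (x : k) :
    F x = (polyCoeffs F).sum fun j v => x ^ j • v := by
  rw [polyCoeffs, dif_pos h]
  exact h.choose_spec x

lemma poly_unique [CharZero k] (c : ℕ →₀ A)
    (h : ∀ x : k, (c.sum fun j v => x ^ j • v) = 0) : c = 0 := by
  ext j
  show c j = 0
  rw [← (Module.forall_dual_apply_eq_zero_iff k (c j))]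
  intro f
  have hP0 : (∑ i ∈ c.support, Polynomial.C (f (c i)) * Polynomial.X ^ i) = (0 : Polynomial k) := by
    apply Polynomial.funext
    intro x
    rw [Polynomial.eval_zero, Polynomial.eval_finset_sum]
    have hfx := congrArg f (h x)
    rw [map_zero, Finsupp.sum, map_sum] at hfx
    rw [← hfx]
    apply Finset.sum_congr rfl
    intro i _
    simp only [Polynomial.eval_mul, Polynomial.eval_C, Polynomial.eval_pow, Polynomial.eval_X,
      map_smul, smul_eq_mul]
    ring
  have hc := congrArg (fun p => Polynomial.coeff p j) hP0
  simp only [Polynomial.finset_sum_coeff, Polynomial.coeff_zero] at hc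
  have hco : ∀ i ∈ c.support, (Polynomial.C (f (c i)) * Polynomial.X ^ i).coeff j
      = if j = i then f (c i) else 0 := by
    intro i _
    rw [Polynomial.coeff_C_mul, Polynomial.coeff_X_pow]
    by_cases hij : j = i <;> simp [hij]
  rw [Finset.sum_congr rfl hco, Finset.sum_ite_eq c.support j (fun i => f (c i))] at hc
  by_cases hj : j ∈ c.support
  · rw [if_pos hj] at hc; exact hc
  · rw [Finsupp.notMem_support_iff.mp hj, map_zero]

lemma polyCoeffs_eq [CharZero k] {F : k → A} (c : ℕ →₀ A)
    (h : ∀ x : k, F x = c.sum fun j v => x ^ j • v) : polyCoeffs F = c := by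
  have hF : IsPolyFun F := ⟨c, h⟩
  have hsub : polyCoeffs F - c = 0 := by
    apply poly_unique (k := k)
    intro x
    rw [Finsupp.sum_sub_index (fun a b₁ b₂ => smul_sub _ _ _), ← polyCoeffs_spec hF x, ← h x,
      sub_self]
  exact sub_eq_zero.mp hsub

lemma evalNegD_fst [CharZero k] {M : Type*} [AddCommGroup M] [Module k M]
    (D₁ : A →ₗ[k] A) (D₂ : (A × M) →ₗ[k] (A × M))
    (hD : ∀ v : A × M, (D₂ v).1 = D₁ v.1) (G : k → A × M) (hG : IsPolyFun G) :
    (evalNegD D₂ G).1 = evalNegD D₁ fun x => (G x).1 := by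
  have hpow : ∀ (j : ℕ) (v : A × M), ((D₂ ^ j) v).1 = (D₁ ^ j) v.1 := by
    intro j
    induction j with
    | zero => intro v; simp
    | succ n ih =>
        intro v
        rw [pow_succ', pow_succ']
        simp only [Module.End.mul_apply]
        rw [hD, ih]
  have hc : polyCoeffs (fun x => (G x).1) = (polyCoeffs G).mapRange Prod.fst rfl := by
    apply polyCoeffs_eq
    intro x
    rw [Finsupp.sum_mapRange_index (fun a => smul_zero _)]
    rw [polyCoeffs_spec hG x, Finsupp.sum, Finsupp.sum, Prod.fst_sum]
    exact Finset.sum_congr rfl fun i _ => rfl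
  rw [evalNegD, evalNegD, hc, Finsupp.sum_mapRange_index (fun a => by simp)]
  rw [Finsupp.sum, Finsupp.sum, Prod.fst_sum]
  apply Finset.sum_congr rfl
  intro i _
  show (((-1 : ℤ) ^ i) • ((D₂ ^ i) _)).1 = _
  rw [show ((((-1 : ℤ) ^ i) • ((D₂ ^ i) (polyCoeffs G i))).1 : A)
      = ((-1 : ℤ) ^ i) • ((D₂ ^ i) (polyCoeffs G i)).1 from rfl, hpow]

end Aux

/-- Corollary 6.4.  Let `A` be an associative conformal algebra,
`M` a conformal `A`-bimodule, and suppose the split extension `B = A ⊕̂ M`, with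
λ-product `(a, u)_λ (b, v) = (a_λ b, a ⊳_λ v + u ⊲_λ b + u_λ v)` for a conformal
product on `M`, is an associative conformal algebra.  Let `p : B → A, (a, u) ↦ a` and
`q : A → B, a ↦ (a, 0)`.  Then for each `n ≥ 1` the assignment
`[φ] ↦ [p ∘ φ ∘ q^{⊗n}]` gives a well-defined linear map `Φⁿ : HHⁿ(B) → HHⁿ(A)`
(it sends cochains to cochains, cocycles to cocycles and coboundaries to
coboundaries), and `Φ⁰([(a, u)]) = [a]` is well defined on `HH⁰`. -/
theorem split_extension_cohomology_map {k A : Type*} [Field k] [CharZero k]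
    [AddCommGroup A] [Module k A] (S : AssocConfAlg k A)
    {M : Type*} [AddCommGroup M] [Module k M] (Bi : ConfBimod S M)
    (mulM : M → M → k → M) (T : AssocConfAlg k (A × M))
    (hD : ∀ x : A × M, T.D x = (S.D x.1, Bi.DM x.2))
    (hmul : ∀ x y : A × M, ∀ lam : k,
      T.mul x y lam
        = (S.mul x.1 y.1 lam,
            Bi.lact x.1 y.2 lam + Bi.ract x.2 y.1 lam + mulM x.2 y.2 lam)) :
    -- Φⁿ for n ≥ 1: well-defined on cochains, cocycles and coboundaries
    (∀ n : ℕ, 1 ≤ n → ∀ φ : CMap k (A × M), IsU T.D (n - 1) φ →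
      IsU S.D (n - 1) (fun lam a => (φ lam (fun r => ((a r, 0) : A × M))).1) ∧
      (hdiff T.mul n φ = 0 →
        hdiff S.mul n (fun lam a => (φ lam (fun r => ((a r, 0) : A × M))).1) = 0) ∧
      (IsCoboundary T.D T.mul n φ →
        IsCoboundary S.D S.mul n (fun lam a => (φ lam (fun r => ((a r, 0) : A × M))).1))) ∧
    -- Φ⁰ sends 0-cocycles to 0-cocycles
    (∀ au : A × M, hdiff0 T.D T.mul au = 0 → hdiff0 S.D S.mul au.1 = 0) ∧
    -- Φ⁰ is well defined on the quotient B/∂B → A/∂A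
    (∀ au au' : A × M, (∃ c : A × M, au - au' = T.D c) →
      ∃ e : A, au.1 - au'.1 = S.D e) := by
  classical
  have hmul1 : ∀ (x y : A × M) (lam : k), (T.mul x y lam).1 = S.mul x.1 y.1 lam := by
    intro x y lam; rw [hmul]
  have hlz : ∀ (a : A) (lam : k), Bi.lact a 0 lam = 0 := by
    intro a lam
    have := Bi.lact_smul_right 0 a 0 lam
    simpa using this
  have hrz : ∀ (a : A) (lam : k), Bi.ract 0 a lam = 0 := by
    intro a lam
    have := Bi.ract_smul_left 0 0 a lam
    simpa using this
  have hmz : ∀ lam : k, mulM 0 0 lam = 0 := by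
    intro lam
    have h0 : T.mul 0 0 lam = 0 := by
      have := T.smul_left 0 0 0 lam
      simpa using this
    rw [hmul 0 0 lam] at h0
    have h2 := congrArg Prod.snd h0
    simpa [hlz, hrz] using h2
  have qmul : ∀ (a b : A) (lam : k),
      T.mul (a, 0) (b, 0) lam = ((S.mul a b lam, 0) : A × M) := by
    intro a b lam
    rw [hmul]
    simp [hlz, hrz, hmz]
  have hDfst : ∀ v : A × M, (T.D v).1 = S.D v.1 := fun v => by rw [hD]
  have qu : ∀ (a : ℕ → A) (i : ℕ) (x : A),
      (fun r => ((Function.update a i x r, 0) : A × M))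
        = Function.update (fun r => ((a r, 0) : A × M)) i ((x, 0) : A × M) := by
    intro a i x
    funext r
    by_cases h : r = i <;> simp [Function.update_apply, h]
  have zfst : ∀ (z : ℤ) (v : A × M), (z • v).1 = z • v.1 := fun _ _ => rfl
  have hIsU : ∀ (m : ℕ) (φ : CMap k (A × M)), IsU T.D m φ →
      IsU S.D m (fun lam a => (φ lam (fun r => ((a r, 0) : A × M))).1) := by
    intro m φ hU
    constructor
    · intro lam lam' a a' h1 h2
      exact congrArg Prod.fst (hU.depends _ _ _ _ h1 (fun r hr => by rw [h2 r hr]))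
    · intro lam a i hi x y
      simp only [qu]
      rw [show ((x + y, (0:M)) : A × M) = (x, 0) + (y, 0) by simp]
      rw [hU.map_add lam _ i hi]
      rfl
    · intro lam a i hi r x
      simp only [qu]
      rw [show ((r • x, (0:M)) : A × M) = r • ((x, 0) : A × M) by simp]
      rw [hU.map_smul lam _ i hi]
      rfl
    · intro a
      obtain ⟨N, c, hc⟩ := hU.poly (fun r => ((a r, 0) : A × M))
      refine ⟨N, fun α => (c α).1, fun lam => ?_⟩
      show (φ lam fun r => ((a r, 0) : A × M)).1 = _
      have hc' : (φ lam fun r => ((a r, 0) : A × M))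
          = ∑ α : Fin m → Fin N, (∏ r : Fin m, lam r.1 ^ ((α r).1 : ℕ)) • c α := hc lam
      rw [hc', Prod.fst_sum]
      exact Finset.sum_congr rfl fun α _ => rfl
    · intro lam a i hi x
      simp only [qu]
      rw [show ((S.D x, (0:M)) : A × M) = T.D ((x, 0) : A × M) by rw [hD]; simp]
      rw [hU.sesq lam _ i hi]
      rfl
    · intro lam a x
      simp only [qu]
      rw [show ((S.D x, (0:M)) : A × M) = T.D ((x, 0) : A × M) by rw [hD]; simp]
      rw [hU.sesq_last lam _ ((x, 0) : A × M)]
      rw [Prod.fst_add, hDfst]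
      rfl
  have hdkey : ∀ (n : ℕ) (φ : CMap k (A × M)) (lam : ℕ → k) (a : ℕ → A),
      (hdiff T.mul n φ lam (fun r => ((a r, 0) : A × M))).1
        = hdiff S.mul n (fun lam a => (φ lam (fun r => ((a r, 0) : A × M))).1) lam a := by
    intro n φ lam a
    simp only [hdiff]
    rw [Prod.fst_add, Prod.fst_add, Prod.fst_sum, zfst, hmul1, hmul1]
    refine congrArg₂ (· + ·) (congrArg₂ (· + ·) rfl ?_) rfl
    apply Finset.sum_congr rfl
    intro i _
    rw [zfst]
    have harg : (fun r => if r < i then ((a r, 0) : A × M)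
          else if r = i then T.mul (a i, 0) (a (i + 1), 0) (lam i) else (a (r + 1), 0))
        = fun r => (((if r < i then a r else if r = i then S.mul (a i) (a (i + 1)) (lam i)
            else a (r + 1)), 0) : A × M) := by
      funext r
      by_cases h1 : r < i
      · simp [h1]
      · by_cases h2 : r = i
        · subst h2
          simp [h1, qmul]
        · simp [h1, h2]
    rw [harg]
  have h0key : ∀ (b : A × M) (lam : ℕ → k) (a : ℕ → A),
      (hdiff0 T.D T.mul b lam (fun r => ((a r, 0) : A × M))).1
        = hdiff0 S.D S.mul b.1 lam a := by
    intro b lam a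
    simp only [hdiff0]
    rw [Prod.fst_sub, hmul1]
    congr 1
    rw [evalNegD_fst S.D T.D hDfst _ (T.poly _ b)]
    congr 1
    funext x
    rw [hmul1]
  refine ⟨?_, ?_, ?_⟩
  · intro n hn φ hU
    refine ⟨hIsU _ φ hU, ?_, ?_⟩
    · intro hz
      funext lam a
      rw [← hdkey n φ lam a, hz]
      rfl
    · intro hcb
      obtain ⟨m, rfl⟩ : ∃ m, n = m + 1 := ⟨n - 1, (Nat.succ_pred_eq_of_pos hn).symm⟩
      cases m with
      | zero =>
          obtain ⟨b, rfl⟩ := hcb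
          refine ⟨b.1, ?_⟩
          funext lam a
          exact h0key b lam a
      | succ m' =>
          obtain ⟨ψ', hψU, rfl⟩ := hcb
          exact ⟨fun lam a => (ψ' lam (fun r => ((a r, 0) : A × M))).1, hIsU _ _ hψU,
            funext fun lam => funext fun a => hdkey (m' + 1) ψ' lam a⟩
  · intro au h
    funext lam a
    rw [← h0key au lam a, h]
    rfl
  · rintro au au' ⟨c, hc⟩
    refine ⟨c.1, ?_⟩
    have h1 := congrArg Prod.fst hc
    rw [Prod.fst_sub, hDfst] at h1
    exact h1
end
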